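/- arXiv:2409.11918 — 10 statements merged into one kernel-verified Lean document; each statement's English description precedes it below -/
import Mathlib

section
/- Every automorphism of the generalized quaternion group Q_{4n} (n ≥ 3) is of the form a^i ↦ a^{ri}, b*a^i ↦ b*a^{ri+s} for some r ∈ (Z/2n)^× and s ∈ Z/2n. -/
open QuaternionGroup in
theorem stmt_1 (n : ℕ) (hn : 3 ≤ n) (α : QuaternionGroup n ≃* QuaternionGroup n) :
    ∃ (r : (ZMod (2 * n))ˣ) (s : ZMod (2 * n)),
      (∀ i : ZMod (2 * n), α (QuaternionGroup.a i) = QuaternionGroup.a ((r : ZMod (2 * n)) * i)) ∧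
      (∀ i : ZMod (2 * n), α (QuaternionGroup.xa i) =
        QuaternionGroup.xa ((r : ZMod (2 * n)) * i + s)) := by
  have hn0 : n ≠ 0 := by omega
  haveI : NeZero n := ⟨hn0⟩
  -- Step 1 : α (a 1) = a r₀ for some r₀
  have hord : orderOf (α (a 1)) = 2 * n := by
    rw [MulEquiv.orderOf_eq, orderOf_a_one]
  obtain ⟨r₀, hr₀⟩ : ∃ r₀, α (a 1) = a r₀ := by
    cases h : α (a 1) with
    | a j => exact ⟨j, rfl⟩
    | xa j =>
      rw [h, orderOf_xa] at hord
      omega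
  -- Step 2 : r₀ is a unit
  have hcop : Nat.Coprime (ZMod.val r₀) (2 * n) := by
    have h2n : (2 * n) ≠ 0 := by omega
    have := orderOf_a (n := n) r₀
    rw [← hr₀, hord] at this
    have hdvd : Nat.gcd (2 * n) (ZMod.val r₀) ∣ 2 * n := Nat.gcd_dvd_left _ _
    have hmc := Nat.div_mul_cancel hdvd
    rw [← this] at hmc
    have : Nat.gcd (2 * n) (ZMod.val r₀) = 1 := by nlinarith
    simpa [Nat.Coprime, Nat.gcd_comm] using this
  refine ⟨ZMod.unitOfCoprime _ hcop, ?_⟩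
  have hrcoe : ((ZMod.unitOfCoprime _ hcop : (ZMod (2 * n))ˣ) : ZMod (2 * n)) = r₀ := by
    simp [ZMod.unitOfCoprime, ZMod.natCast_zmod_val]
  set r : (ZMod (2 * n))ˣ := ZMod.unitOfCoprime _ hcop with hr
  -- Step 3 : α (a i) = a (r * i)
  have ha : ∀ i : ZMod (2 * n), α (a i) = a ((r : ZMod (2 * n)) * i) := by
    intro i
    have : a i = (a 1 : QuaternionGroup n) ^ i.val := by
      rw [a_one_pow, ZMod.natCast_zmod_val]
    rw [this, map_pow, hr₀, ← ZMod.natCast_zmod_val (n := 2 * n) r₀, ← a_one_pow,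
      ← pow_mul, a_one_pow, hrcoe]
    push_cast
    rw [ZMod.natCast_zmod_val, ZMod.natCast_zmod_val]
  -- Step 4 : α (xa 0) = xa s
  obtain ⟨s, hs⟩ : ∃ s, α (xa 0) = xa s := by
    cases h : α (xa 0) with
    | a j =>
      exfalso
      have : α (a ((r⁻¹ : (ZMod (2 * n))ˣ) * j)) = a j := by
        rw [ha]
        congr 1
        rw [← mul_assoc, ← Units.val_mul, mul_inv_cancel, Units.val_one, one_mul]
      rw [← h] at this
      exact absurd (α.injective this) (by simp)
    | xa j => exact ⟨j, rfl⟩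
  refine ⟨s, ha, fun i => ?_⟩
  have : xa i = xa 0 * a i := by rw [xa_mul_a, zero_add]
  rw [this, map_mul, hs, ha, xa_mul_a, add_comm]
end

section
/- For an odd positive integer n, the generalized quaternion group Q_{4n} is homogeneous: every isomorphism between two isomorphic subgroups of Q_{4n} extends to an automorphism of Q_{4n}. -/
open QuaternionGroup

namespace Stmt2Aux



lemma exists_unit_mul_eq_gcd {N : ℕ} [NeZero N] (i : ZMod N) :
    ∃ u : (ZMod N)ˣ, (u : ZMod N) * i = (Nat.gcd N i.val : ZMod N) := by
  have hN0 : N ≠ 0 := NeZero.ne N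
  set c := Nat.gcd N i.val with hc
  have hcpos : 0 < c := Nat.gcd_pos_of_pos_left _ (Nat.pos_of_ne_zero hN0)
  obtain ⟨N', hN'⟩ : c ∣ N := Nat.gcd_dvd_left _ _
  obtain ⟨i', hi'⟩ : c ∣ i.val := Nat.gcd_dvd_right _ _
  have hcop : Nat.Coprime i' N' := by
    have h1 := Nat.coprime_div_gcd_div_gcd (m := N) (n := i.val) hcpos
    have e1 : N / c = N' := by rw [hN', Nat.mul_div_cancel_left _ hcpos]
    have e2 : i.val / c = i' := by rw [hi', Nat.mul_div_cancel_left _ hcpos]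
    rw [← hc, e1, e2] at h1
    exact h1.symm
  have hdvd : N' ∣ N := ⟨c, by rw [hN']; ring⟩
  obtain ⟨u, hu⟩ := ZMod.unitsMap_surjective hdvd (ZMod.unitOfCoprime i' hcop)
  have hu2 : (ZMod.castHom hdvd (ZMod N')) (u : ZMod N) = (i' : ZMod N') := by
    have := congrArg Units.val hu
    simpa [ZMod.unitsMap_def] using this
  have h2 : (((u : ZMod N).val : ℕ) : ZMod N') = (i' : ZMod N') := by
    conv_lhs => rw [← map_natCast (ZMod.castHom hdvd (ZMod N'))]
    rw [ZMod.natCast_zmod_val]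
    exact hu2
  have hmod : (u : ZMod N).val ≡ i' [MOD N'] := (ZMod.natCast_eq_natCast_iff _ _ _).mp h2
  have hmod2 : c * (u : ZMod N).val ≡ c * i' [MOD N] := by
    have := hmod.mul_left' (c := c)
    rwa [← hN'] at this
  have key : ((c : ZMod N)) * (u : ZMod N) = i := by
    have h3 : ((c * (u : ZMod N).val : ℕ) : ZMod N) = ((c * i' : ℕ) : ZMod N) :=
      (ZMod.natCast_eq_natCast_iff _ _ _).mpr hmod2
    rw [← hi', ZMod.natCast_zmod_val] at h3
    push_cast at h3
    rw [ZMod.natCast_zmod_val] at h3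
    exact h3
  refine ⟨u⁻¹, ?_⟩
  rw [← key, mul_comm ((c : ZMod N)) ((u : (ZMod N)ˣ) : ZMod N), ← mul_assoc,
    Units.inv_mul, one_mul]

lemma exists_unit_mul_eq {N : ℕ} [NeZero N] {i j : ZMod N}
    (h : Nat.gcd N i.val = Nat.gcd N j.val) :
    ∃ u : (ZMod N)ˣ, (u : ZMod N) * i = j := by
  obtain ⟨u, hu⟩ := exists_unit_mul_eq_gcd i
  obtain ⟨v, hv⟩ := exists_unit_mul_eq_gcd j
  refine ⟨v⁻¹ * u, ?_⟩
  rw [Units.val_mul, mul_assoc, hu, h, ← hv, ← mul_assoc, Units.inv_mul, one_mul]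
variable {n : ℕ}

lemma a_inv (i : ZMod (2 * n)) : (a i : QuaternionGroup n)⁻¹ = a (-i) := rfl

lemma xa_inv (i : ZMod (2 * n)) : (xa i : QuaternionGroup n)⁻¹ = xa ((n : ZMod (2 * n)) + i) := rfl

lemma a_pow (m : ℕ) (i : ZMod (2 * n)) :
    (a i : QuaternionGroup n) ^ m = a ((m : ZMod (2 * n)) * i) := by
  induction m with
  | zero => rw [pow_zero, Nat.cast_zero, zero_mul, one_def]
  | succ m ih =>
    rw [pow_succ, ih, a_mul_a]
    congr 1
    push_cast
    ring

lemma a_zpow (m : ℤ) (i : ZMod (2 * n)) :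
    (a i : QuaternionGroup n) ^ m = a ((m : ZMod (2 * n)) * i) := by
  cases m with
  | ofNat m =>
    rw [Int.ofNat_eq_coe, zpow_natCast, a_pow]
    congr 1
    push_cast
    ring
  | negSucc m =>
    rw [zpow_negSucc, a_pow, a_inv]
    congr 1
    push_cast [Int.negSucc_eq]
    ring

/-- The function underlying the automorphism `a i ↦ a (k*i)`, `xa i ↦ xa (k*i + t)`. -/
def autFun (k t : ZMod (2 * n)) : QuaternionGroup n → QuaternionGroup n
  | a i => a (k * i)
  | xa i => xa (k * i + t)

/-- The automorphism of `QuaternionGroup n` given by a unit `k` (with `k * n = n`) and `t`. -/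
def autEquiv (k : (ZMod (2 * n))ˣ) (t : ZMod (2 * n))
    (hk : (k : ZMod (2 * n)) * (n : ZMod (2 * n)) = (n : ZMod (2 * n))) :
    QuaternionGroup n ≃* QuaternionGroup n where
  toFun := autFun (k : ZMod (2 * n)) t
  invFun := autFun ((k⁻¹ : (ZMod (2 * n))ˣ) : ZMod (2 * n))
    (-(((k⁻¹ : (ZMod (2 * n))ˣ) : ZMod (2 * n)) * t))
  left_inv := by
    rintro (i | i) <;> simp only [autFun] <;> congr 1
    · exact Units.inv_mul_cancel_left k i
    · rw [mul_add, Units.inv_mul_cancel_left]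
      ring
  right_inv := by
    rintro (i | i) <;> simp only [autFun] <;> congr 1
    · exact Units.mul_inv_cancel_left k i
    · rw [mul_add, Units.mul_inv_cancel_left, mul_neg, Units.mul_inv_cancel_left]
      ring
  map_mul' := by
    rintro (i | i) (j | j) <;>
      simp only [autFun, a_mul_a, a_mul_xa, xa_mul_a, xa_mul_xa] <;> congr 1
    · ring
    · ring
    · ring
    · linear_combination hk

@[simp]
lemma autEquiv_a (k : (ZMod (2 * n))ˣ) (t : ZMod (2 * n)) (hk) (i : ZMod (2 * n)) :
    autEquiv k t hk (a i) = a ((k : ZMod (2 * n)) * i) := rfl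

@[simp]
lemma autEquiv_xa (k : (ZMod (2 * n))ˣ) (t : ZMod (2 * n)) (hk) (i : ZMod (2 * n)) :
    autEquiv k t hk (xa i) = xa ((k : ZMod (2 * n)) * i + t) := rfl

lemma units_mul_n [NeZero n] (k : (ZMod (2 * n))ˣ) :
    (k : ZMod (2 * n)) * (n : ZMod (2 * n)) = (n : ZMod (2 * n)) := by
  have hco : Nat.Coprime ((k : ZMod (2 * n)).val) (2 * n) := ZMod.val_coe_unit_coprime k
  have h2 : Nat.Coprime ((k : ZMod (2 * n)).val) 2 :=
    Nat.Coprime.coprime_dvd_right ⟨n, rfl⟩ hco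
  have hodd : ¬ (2 ∣ (k : ZMod (2 * n)).val) := by
    intro hd
    have := Nat.eq_one_of_dvd_coprimes h2 hd (dvd_refl 2)
    omega
  obtain ⟨m, hm⟩ : ∃ m, (k : ZMod (2 * n)).val = 2 * m + 1 := by
    rcases Nat.even_or_odd ((k : ZMod (2 * n)).val) with he | ho
    · exact absurd he.two_dvd hodd
    · exact ho
  have h0 : ((2 * n : ℕ) : ZMod (2 * n)) = 0 := ZMod.natCast_self _
  rw [← ZMod.natCast_zmod_val (k : ZMod (2 * n)), hm]
  push_cast at h0 ⊢
  linear_combination (m : ZMod (2 * n)) * h0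

lemma xa_pow_ne_one [NeZero n] (hodd : Odd n) (i : ZMod (2 * n)) :
    ¬ ((xa i : QuaternionGroup n) ^ (2 * n) = 1) := by
  intro h
  have h4 : 4 ∣ 2 * n := by
    have := orderOf_dvd_of_pow_eq_one h
    rwa [orderOf_xa] at this
  obtain ⟨m, hm⟩ := hodd
  omega

lemma a_pow_eq_one (i : ZMod (2 * n)) : (a i : QuaternionGroup n) ^ (2 * n) = 1 := by
  rw [a_pow, ZMod.natCast_self, zero_mul, one_def]

lemma coe_pow_eq_one_of {G : Type*} [Group G] {H K : Subgroup G} (σ : H ≃* K) (h : H) (m : ℕ)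
    (hh : (h : G) ^ m = 1) : ((σ h : K) : G) ^ m = 1 := by
  have h1 : h ^ m = 1 := by
    apply Subtype.coe_injective
    simpa using hh
  have h2 : σ h ^ m = 1 := by rw [← map_pow, h1, map_one]
  calc ((σ h : K) : G) ^ m = ((σ h ^ m : K) : G) := by norm_cast
    _ = 1 := by rw [h2]; rfl

end Stmt2Aux

theorem stmt_2 (n : ℕ) (hn : 0 < n) (hodd : Odd n)
    (H K : Subgroup (QuaternionGroup n)) (σ : H ≃* K) :
    ∃ α : QuaternionGroup n ≃* QuaternionGroup n,
      ∀ h : H, α (h : QuaternionGroup n) = ((σ h : K) : QuaternionGroup n) := by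
  haveI : NeZero n := ⟨hn.ne'⟩
  classical
  -- the additive subgroup of exponents `i` with `a i ∈ H`
  let S : AddSubgroup (ZMod (2 * n)) :=
    { carrier := {i | a i ∈ H}
      add_mem' := fun {x y} hx hy => by
        have := H.mul_mem hx hy
        rwa [a_mul_a] at this
      zero_mem' := by
        have := H.one_mem
        rwa [one_def] at this
      neg_mem' := fun {x} hx => by
        have := H.inv_mem hx
        rwa [Stmt2Aux.a_inv] at this }
  obtain ⟨g, hg⟩ := IsAddCyclic.exists_generator (α := S)
  set i1 : ZMod (2 * n) := (g : ZMod (2 * n)) with hi1def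
  have hi1 : a i1 ∈ H := g.2
  set x1 : H := ⟨a i1, hi1⟩ with hx1def
  have hmem : ∀ i, a i ∈ H → ∃ m : ℤ, (m : ZMod (2 * n)) * i1 = i := by
    intro i hi
    obtain ⟨m, hm⟩ := AddSubgroup.mem_zmultiples_iff.mp (hg ⟨i, hi⟩)
    refine ⟨m, ?_⟩
    have := congrArg (Subtype.val) hm
    simpa [zsmul_eq_mul] using this
  obtain ⟨j1, hj1⟩ : ∃ j1, ((σ x1 : K) : QuaternionGroup n) = a j1 := by
    have h1 : ((σ x1 : K) : QuaternionGroup n) ^ (2 * n) = 1 :=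
      Stmt2Aux.coe_pow_eq_one_of σ x1 _ (Stmt2Aux.a_pow_eq_one i1)
    cases hc : ((σ x1 : K) : QuaternionGroup n) with
    | a j => exact ⟨j, rfl⟩
    | xa j => rw [hc] at h1; exact absurd h1 (Stmt2Aux.xa_pow_ne_one hodd j)
  have hord : orderOf (a i1) = orderOf (a j1) := by
    calc orderOf (a i1) = orderOf x1 := Subgroup.orderOf_coe x1
      _ = orderOf (σ x1) := (MulEquiv.orderOf_eq σ x1).symm
      _ = orderOf ((σ x1 : K) : QuaternionGroup n) := (Subgroup.orderOf_coe _).symm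
      _ = orderOf (a j1) := by rw [hj1]
  have hgcd : Nat.gcd (2 * n) i1.val = Nat.gcd (2 * n) j1.val := by
    rw [orderOf_a, orderOf_a] at hord
    have h2n : 2 * n ≠ 0 := by positivity
    have d1 : Nat.gcd (2 * n) i1.val ∣ 2 * n := Nat.gcd_dvd_left _ _
    have d2 : Nat.gcd (2 * n) j1.val ∣ 2 * n := Nat.gcd_dvd_left _ _
    conv_lhs => rw [← Nat.div_div_self d1 h2n]
    conv_rhs => rw [← Nat.div_div_self d2 h2n]
    rw [hord]
  obtain ⟨k, hk⟩ := Stmt2Aux.exists_unit_mul_eq hgcd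
  have hkn := Stmt2Aux.units_mul_n (n := n) k
  have main_a : ∀ (t : ZMod (2 * n)) (i : ZMod (2 * n)) (hi : a i ∈ H),
      Stmt2Aux.autEquiv k t hkn ((⟨a i, hi⟩ : H) : QuaternionGroup n)
        = ((σ ⟨a i, hi⟩ : K) : QuaternionGroup n) := by
    intro t i hi
    obtain ⟨m, hm⟩ := hmem i hi
    have hx : (⟨a i, hi⟩ : H) = x1 ^ m := by
      apply Subtype.coe_injective
      show (a i : QuaternionGroup n) = ((x1 ^ m : H) : QuaternionGroup n)
      rw [SubgroupClass.coe_zpow]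
      show a i = (a i1) ^ m
      rw [Stmt2Aux.a_zpow, hm]
    rw [hx, map_zpow σ, SubgroupClass.coe_zpow, SubgroupClass.coe_zpow]
    show Stmt2Aux.autEquiv k t hkn ((a i1) ^ m)
        = (((σ x1 : K) : QuaternionGroup n)) ^ m
    rw [hj1, Stmt2Aux.a_zpow, Stmt2Aux.a_zpow, Stmt2Aux.autEquiv_a, ← hk]
    congr 1
    ring
  by_cases hX : ∀ i : ZMod (2 * n), xa i ∉ H
  · refine ⟨Stmt2Aux.autEquiv k 0 hkn, ?_⟩
    rintro ⟨(i | i), hi⟩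
    · exact main_a 0 i hi
    · exact absurd hi (hX i)
  · push_neg at hX
    obtain ⟨i0, hi0⟩ := hX
    set x0 : H := ⟨xa i0, hi0⟩ with hx0def
    obtain ⟨j0, hj0⟩ : ∃ j0, ((σ x0 : K) : QuaternionGroup n) = xa j0 := by
      cases hc : ((σ x0 : K) : QuaternionGroup n) with
      | a j =>
        exfalso
        apply Stmt2Aux.xa_pow_ne_one hodd i0
        have h1 : ((σ x0 : K) : QuaternionGroup n) ^ (2 * n) = 1 := by
          rw [hc]; exact Stmt2Aux.a_pow_eq_one j
        have h2 := Stmt2Aux.coe_pow_eq_one_of σ.symm (σ x0) (2 * n) h1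
        rwa [MulEquiv.symm_apply_apply] at h2
      | xa j => exact ⟨j, rfl⟩
    refine ⟨Stmt2Aux.autEquiv k (j0 - (k : ZMod (2 * n)) * i0) hkn, ?_⟩
    rintro ⟨(i | i), hi⟩
    · exact main_a _ i hi
    · have hiS : a (i0 - i) ∈ H := by
        have key : (xa i : QuaternionGroup n) * (xa i0)⁻¹ = a (i0 - i) := by
          rw [Stmt2Aux.xa_inv, xa_mul_xa]
          congr 1
          have h0 : ((2 * n : ℕ) : ZMod (2 * n)) = 0 := ZMod.natCast_self _
          push_cast at h0
          linear_combination h0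
        rw [← key]
        exact H.mul_mem hi (H.inv_mem hi0)
      obtain ⟨m, hm⟩ := hmem _ hiS
      have hx : (⟨xa i, hi⟩ : H) = x1 ^ m * x0 := by
        apply Subtype.coe_injective
        show (xa i : QuaternionGroup n) = ((x1 ^ m * x0 : H) : QuaternionGroup n)
        rw [Subgroup.coe_mul, SubgroupClass.coe_zpow]
        show xa i = (a i1) ^ m * xa i0
        rw [Stmt2Aux.a_zpow, a_mul_xa, hm]
        congr 1
        ring
      rw [hx, map_mul, map_zpow, Subgroup.coe_mul, Subgroup.coe_mul,
        SubgroupClass.coe_zpow, SubgroupClass.coe_zpow]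
      show Stmt2Aux.autEquiv k _ hkn ((a i1) ^ m * xa i0)
          = ((σ x1 : K) : QuaternionGroup n) ^ m * ((σ x0 : K) : QuaternionGroup n)
      rw [hj1, hj0, Stmt2Aux.a_zpow, Stmt2Aux.a_zpow, a_mul_xa, a_mul_xa,
        Stmt2Aux.autEquiv_xa]
      congr 1
      linear_combination (-(m : ZMod (2 * n))) * hk
end

section
/- For a finite group G, a subset S ⊆ G, an element g ∈ G, and an automorphism α of G, the bi-Cayley graphs BCay(G,S) and BCay(G, gS^α) are isomorphic, where gS^α = {g·α(s) : s ∈ S}. -/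
/-- The bi-Cayley graph `BCay(G,S)`. -/
def BCay (G : Type*) [Group G] (S : Set G) : SimpleGraph (G × Bool) :=
  SimpleGraph.fromRel (fun u v => u.2 = false ∧ v.2 = true ∧ ∃ s ∈ S, v.1 = s * u.1)

theorem stmt_4 (G : Type*) [Group G] [Fintype G] (S : Set G) (g : G)
    (α : G ≃* G) :
    Nonempty (BCay G S ≃g BCay G ((fun s => g * α s) '' S)) := by
  refine ⟨⟨⟨fun p => (if p.2 then g * α p.1 else α p.1, p.2),
      fun p => (if p.2 then α.symm (g⁻¹ * p.1) else α.symm p.1, p.2), ?_, ?_⟩, ?_⟩⟩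
  · rintro ⟨x, b⟩
    cases b <;> simp
  · rintro ⟨x, b⟩
    cases b <;> simp
  · rintro ⟨x, b⟩ ⟨y, c⟩
    cases b <;> cases c <;>
      simp only [BCay, SimpleGraph.fromRel_adj, Equiv.coe_fn_mk, if_true, if_false,
        Bool.true_eq_false, Bool.false_eq_true, ne_eq, Prod.mk.injEq, and_true, and_false,
        false_and, and_self, true_and, Set.mem_image, or_false, false_or, exists_exists_and_eq_and]
    all_goals simp [mul_assoc, ← map_mul]
end

section
/- Let n ≥ 2, ω = e^{πi/n}, and let φ_j be the 2-dimensional representation of Q_{4n} with φ_j(a^k) = diag(ω^{kj}, ω^{-kj}) and φ_j(b a^k) = [[0, ω^{-kj}],[−ω^{kj}, 0]] for odd j with 1 ≤ j ≤ n−1. Then for S = {1, a, b}, the matrix φ_j(S)·φ_j(S^{-1}) equals (3 + 2cos(jπ/n))·I_2, where φ_j(S) = Σ_{s∈S} φ_j(s) and S^{-1} = {1, a^{-1}, b a^n}. -/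
open Complex

theorem stmt_8 (n j : ℕ) (hn : 2 ≤ n) (hj1 : 1 ≤ j) (hj2 : j ≤ n - 1) (hjodd : Odd j) :
    let ω : ℂ := Complex.exp (Real.pi * Complex.I / n)
    (!![(1 : ℂ), 0; 0, 1] + !![ω ^ j, 0; 0, ω⁻¹ ^ j] + !![0, 1; -1, 0]) *
        (!![(1 : ℂ), 0; 0, 1] + !![ω⁻¹ ^ j, 0; 0, ω ^ j] +
          !![0, ω⁻¹ ^ (n * j); -ω ^ (n * j), 0]) =
      ((3 : ℂ) + 2 * Real.cos (j * Real.pi / n)) • (1 : Matrix (Fin 2) (Fin 2) ℂ) := by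
  intro ω
  have hn0 : (n : ℂ) ≠ 0 := Nat.cast_ne_zero.mpr (by omega)
  have hω0 : ω ≠ 0 := Complex.exp_ne_zero _
  have hωn : ω ^ n = -1 := by
    show Complex.exp _ ^ n = -1
    rw [← Complex.exp_nat_mul]
    have : (n : ℂ) * (Real.pi * Complex.I / n) = Real.pi * Complex.I := by
      field_simp
    rw [this, Complex.exp_pi_mul_I]
  have hnj : ω ^ (n * j) = -1 := by
    rw [pow_mul, hωn, hjodd.neg_one_pow]
  have hnj' : ω⁻¹ ^ (n * j) = -1 := by
    rw [inv_pow, hnj]; norm_num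
  have hinv : ω ^ j * ω⁻¹ ^ j = 1 := by
    rw [← mul_pow, mul_inv_cancel₀ hω0, one_pow]
  have hcos : ω ^ j + ω⁻¹ ^ j = 2 * (Real.cos (j * Real.pi / n) : ℂ) := by
    have h1 : ω ^ j = Complex.exp ((j * Real.pi / n : ℝ) * Complex.I) := by
      rw [← Complex.exp_nat_mul]
      congr 1
      push_cast
      ring
    have h2 : ω⁻¹ ^ j = Complex.exp (-((j * Real.pi / n : ℝ) * Complex.I)) := by
      rw [inv_pow, ← Complex.exp_nat_mul, ← Complex.exp_neg]
      congr 1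
      push_cast
      ring
    rw [h1, h2, ← neg_mul, Complex.exp_mul_I, Complex.exp_mul_I, Complex.cos_neg,
      Complex.sin_neg, Complex.ofReal_cos]
    ring
  rw [show ((3 : ℂ) + 2 * (Real.cos (j * Real.pi / n) : ℂ)) = 3 + (ω ^ j + ω⁻¹ ^ j) from by
    rw [hcos]]
  have hωj : ω ^ j ≠ 0 := pow_ne_zero _ hω0
  ext i k
  fin_cases i <;> fin_cases k <;>
    simp [Matrix.mul_apply, Fin.sum_univ_two, Matrix.one_apply, hnj, hnj'] <;>
    (try field_simp) <;> ring
end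

section
/- Let n ≥ 2, ω = e^{πi/n}, and let η_h be the 2-dimensional representation of Q_{4n} with η_h(a^k) = diag(ω^{2kh}, ω^{-2kh}) and η_h(b a^k) = [[0, ω^{-2kh}],[ω^{2kh}, 0]]. Then for S = {1, a, b}, det(λ²I_2 − η_h(S)η_h(S^{-1})) = (λ² − (3 + 2cos(2hπ/n)))² − (4cos(hπ/n))². -/
open Complex

theorem stmt_9 (n h : ℕ) (hn : 2 ≤ n) (hh1 : 1 ≤ h) (hh2 : h ≤ (n - 1) / 2) (lam : ℂ) :
    let ω : ℂ := Complex.exp (Real.pi * Complex.I / n)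
    Matrix.det
        (lam ^ 2 • (1 : Matrix (Fin 2) (Fin 2) ℂ) -
          (!![(1 : ℂ), 0; 0, 1] + !![ω ^ (2 * h), 0; 0, ω⁻¹ ^ (2 * h)] + !![0, 1; 1, 0]) *
            (!![(1 : ℂ), 0; 0, 1] + !![ω⁻¹ ^ (2 * h), 0; 0, ω ^ (2 * h)] +
              !![0, ω⁻¹ ^ (2 * n * h); ω ^ (2 * n * h), 0])) =
      (lam ^ 2 - ((3 : ℂ) + 2 * Real.cos (2 * h * Real.pi / n))) ^ 2 -
        ((4 : ℂ) * Real.cos (h * Real.pi / n)) ^ 2 := by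
  intro ω
  have hn0 : (n : ℂ) ≠ 0 := Nat.cast_ne_zero.mpr (by omega)
  set u : ℂ := ω ^ h with hu_def
  have hu0 : u ≠ 0 := pow_ne_zero _ (Complex.exp_ne_zero _)
  have key : ∀ k : ℕ, Complex.exp ((k : ℂ) * (Real.pi * Complex.I / n)) = ω ^ k := by
    intro k; rw [Complex.exp_nat_mul]
  have hp : ω ^ (2 * h) = u ^ 2 := by rw [hu_def, ← pow_mul, mul_comm]
  have hp' : ω⁻¹ ^ (2 * h) = (u ^ 2)⁻¹ := by rw [inv_pow, hp]
  have h2n : ω ^ (2 * n * h) = 1 := by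
    rw [← key]
    have : ((2 * n * h : ℕ) : ℂ) * (Real.pi * Complex.I / n)
        = ((h : ℤ) : ℂ) * (2 * Real.pi * Complex.I) := by
      push_cast; field_simp
    rw [this]
    exact Complex.exp_int_mul_two_pi_mul_I h
  have h2n' : ω⁻¹ ^ (2 * n * h) = 1 := by rw [inv_pow, h2n, inv_one]
  have f1 : Complex.exp ((2 * (h : ℂ) * Real.pi / n) * Complex.I) = u ^ 2 := by
    rw [show (2 * (h : ℂ) * Real.pi / n) * Complex.I
        = ((2 * h : ℕ) : ℂ) * (Real.pi * Complex.I / n) by push_cast; ring, key, hp]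
  have f2 : Complex.exp (-((2 * (h : ℂ) * Real.pi / n) * Complex.I)) = (u ^ 2)⁻¹ := by
    rw [Complex.exp_neg, f1]
  have g1 : Complex.exp (((h : ℂ) * Real.pi / n) * Complex.I) = u := by
    rw [show ((h : ℂ) * Real.pi / n) * Complex.I
        = ((h : ℕ) : ℂ) * (Real.pi * Complex.I / n) by push_cast; ring, key, hu_def]
  have g2 : Complex.exp (-(((h : ℂ) * Real.pi / n) * Complex.I)) = u⁻¹ := by
    rw [Complex.exp_neg, g1]
  have e1 : Complex.cos (2 * (h : ℂ) * Real.pi / n) = (u ^ 2 + (u ^ 2)⁻¹) / 2 := by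
    have := Complex.two_cos (2 * (h : ℂ) * Real.pi / n)
    rw [neg_mul, f1, f2] at this
    linear_combination this / 2
  have e2 : Complex.cos ((h : ℂ) * Real.pi / n) = (u + u⁻¹) / 2 := by
    have := Complex.two_cos ((h : ℂ) * Real.pi / n)
    rw [neg_mul, g1, g2] at this
    linear_combination this / 2
  rw [h2n, h2n', hp, hp']
  have hdet : ∀ A : Matrix (Fin 2) (Fin 2) ℂ,
      A.det = A 0 0 * A 1 1 - A 0 1 * A 1 0 := fun A => Matrix.det_fin_two A
  rw [hdet]
  simp only [Matrix.sub_apply, Matrix.smul_apply, Matrix.one_apply, Matrix.mul_apply,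
    Matrix.add_apply, Fin.sum_univ_two, Matrix.cons_val', Matrix.cons_val_zero,
    Matrix.cons_val_one, Matrix.head_cons, Matrix.head_fin_const, Matrix.empty_val',
    Matrix.cons_val_fin_one]
  norm_num
  rw [e1, e2]
  field_simp
  ring
end

section
/- For every integer n ≥ 2, the bi-Cayley graphs BCay(Q_{4n}, {1, a, b}) and BCay(Q_{4n}, {1, a², b}) are not isomorphic. -/
set_option linter.unusedSectionVars false
set_option linter.unusedVariables false

namespace BCayAux

open QuaternionGroup SimpleGraph

section Generic

variable {G : Type*} [Group G] {S : Set G}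

lemma adj_up {s : G} (hs : s ∈ S) (x : G) :
    (BCay G S).Adj (x, false) (s * x, true) := by
  rw [BCay, SimpleGraph.fromRel_adj]
  refine ⟨by simp, Or.inl ⟨rfl, rfl, s, hs, rfl⟩⟩

lemma adj_elim {u v : G × Bool} (h : (BCay G S).Adj u v) :
    (∃ s ∈ S, u.2 = false ∧ v.2 = true ∧ v.1 = s * u.1) ∨
      (∃ s ∈ S, v.2 = false ∧ u.2 = true ∧ u.1 = s * v.1) := by
  rw [BCay, SimpleGraph.fromRel_adj] at h
  rcases h.2 with ⟨h1, h2, s, hs, h3⟩ | ⟨h1, h2, s, hs, h3⟩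
  · exact Or.inl ⟨s, hs, h1, h2, h3⟩
  · exact Or.inr ⟨s, hs, h1, h2, h3⟩

/-- Right translation as a graph automorphism of a bi-Cayley graph. -/
def shift (S : Set G) (g : G) : BCay G S ≃g BCay G S where
  toEquiv := (Equiv.mulRight g).prodCongr (Equiv.refl Bool)
  map_rel_iff' := by
    rintro ⟨x, bx⟩ ⟨y, by'⟩
    show (BCay G S).Adj (x * g, bx) (y * g, by') ↔ (BCay G S).Adj (x, bx) (y, by')
    rw [BCay, SimpleGraph.fromRel_adj, SimpleGraph.fromRel_adj]
    have hne : ((x * g, bx) : G × Bool) ≠ (y * g, by') ↔ ((x, bx) : G × Bool) ≠ (y, by') := by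
      simp [Prod.ext_iff]
    have hrel : ∀ a b : G, (∃ s ∈ S, b * g = s * (a * g)) ↔ ∃ s ∈ S, b = s * a := by
      intro a b
      constructor
      · rintro ⟨s, hs, he⟩
        exact ⟨s, hs, by rw [← mul_assoc] at he; exact mul_right_cancel he⟩
      · rintro ⟨s, hs, rfl⟩
        exact ⟨s, hs, by rw [mul_assoc]⟩
    simp only [hne, hrel]

lemma shift_apply (g : G) (x : G) (b : Bool) : (shift S g) (x, b) = (x * g, b) := rfl

/-- Transfer a walk along a graph isomorphism, with the same length. -/
lemma walk_iso {V V' : Type*} {A : SimpleGraph V} {B : SimpleGraph V'} (φ : A ≃g B)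
    {u v : V} (w : A.Walk u v) : ∃ w' : B.Walk (φ u) (φ v), w'.length = w.length :=
  ⟨w.map φ.toHom, w.length_map _⟩

/-- A 1-Lipschitz potential bounds walk lengths below. -/
lemma potential_bound {V : Type*} {A : SimpleGraph V} (f : V → ℤ)
    (hf : ∀ ⦃u v⦄, A.Adj u v → |f u - f v| ≤ 1) :
    ∀ {u v : V} (w : A.Walk u v), |f u - f v| ≤ w.length := by
  intro u v w
  induction w with
  | nil => simp
  | @cons a b c h p ih =>
      have h1 := hf h
      have : |f a - f c| ≤ |f a - f b| + |f b - f c| := abs_sub_le _ _ _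
      simp only [Walk.length_cons]
      push_cast
      omega

/-- An invariant potential (constant on edges) forbids walks between points of
different value. -/
lemma invariant_bound {V : Type*} {A : SimpleGraph V} (f : V → ℕ)
    (hf : ∀ ⦃u v⦄, A.Adj u v → f u = f v) :
    ∀ {u v : V} (w : A.Walk u v), f u = f v := by
  intro u v w
  induction w with
  | nil => rfl
  | @cons a b c h p ih => exact (hf h).trans ih

end Generic

section Pot

variable [NeZero (2 * n)]

noncomputable def C (z : ZMod (2 * n)) : ℤ := min (z.val : ℤ) ((2 * n : ℕ) - (z.val : ℤ))

lemma val_lt' (z : ZMod (2 * n)) : z.val < 2 * n := ZMod.val_lt z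

lemma val_one' (hn : 2 ≤ n) : (1 : ZMod (2 * n)).val = 1 := by
  have : ((1 : ℕ) : ZMod (2*n)).val = 1 % (2*n) := ZMod.val_natCast (n := 2*n) 1
  simpa using this.trans (Nat.mod_eq_of_lt (by omega))

lemma val_two' (hn : 2 ≤ n) : (2 : ZMod (2 * n)).val = 2 := by
  have : ((2 : ℕ) : ZMod (2*n)).val = 2 % (2*n) := ZMod.val_natCast (n := 2*n) 2
  have h2 : ((2 : ℕ) : ZMod (2*n)) = (2 : ZMod (2*n)) := by push_cast; ring
  rw [h2] at this
  exact this.trans (Nat.mod_eq_of_lt (by omega))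

lemma val_n' (hn : 2 ≤ n) : ((n : ℕ) : ZMod (2*n)).val = n := by
  have := ZMod.val_natCast (n := 2*n) n
  rwa [Nat.mod_eq_of_lt (by omega)] at this

lemma C_step (hn : 2 ≤ n) (z : ZMod (2 * n)) :
    C (z + 1) ≤ C z + 1 ∧ C z ≤ C (z + 1) + 1 := by
  have h1 : (z + 1).val = (z.val + (1 : ZMod (2*n)).val) % (2 * n) := ZMod.val_add z 1
  rw [val_one' hn] at h1
  have h2 := val_lt' z
  have h3 := val_lt' (z + 1)
  rcases Nat.lt_or_ge (z.val + 1) (2 * n) with h | h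
  · rw [Nat.mod_eq_of_lt h] at h1
    unfold C; omega
  · have hz : z.val + 1 = 2 * n := by omega
    rw [hz, Nat.mod_self] at h1
    unfold C; omega

lemma C_add_n (hn : 2 ≤ n) (z : ZMod (2 * n)) :
    C (z + (n : ZMod (2*n))) = (n : ℤ) - C z := by
  have h1 : (z + (n : ZMod (2*n))).val = (z.val + n) % (2 * n) := by
    rw [ZMod.val_add, val_n' hn]
  have h2 := val_lt' z
  rcases Nat.lt_or_ge (z.val + n) (2 * n) with h | h
  · rw [Nat.mod_eq_of_lt h] at h1
    unfold C; omega
  · have : (z.val + n) % (2*n) = z.val + n - 2*n := by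
      rw [Nat.mod_eq_sub_mod (by omega), Nat.mod_eq_of_lt (by omega)]
    rw [this] at h1
    unfold C; omega

lemma C_zero : C (0 : ZMod (2*n)) = 0 := by
  unfold C
  rw [ZMod.val_zero]
  have : (0:ℤ) ≤ (2*n:ℕ) := by positivity
  omega

lemma val_add_parity (z w : ZMod (2 * n)) :
    (z + w).val % 2 = (z.val + w.val) % 2 := by
  rw [ZMod.val_add]
  exact Nat.mod_mod_of_dvd _ ⟨n, rfl⟩

/-- The potential function on `BCay(Q_{4n}, {1,a²,b})` certifying that
`(a,1)` is at distance `≥ n+2` from `(1,0)`, for odd `n`. -/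
noncomputable def psi : QuaternionGroup n × Bool → ℤ
  | (a k, false) => if Even k.val then C k else (n+2 : ℤ) - C k
  | (a k, true) => if Even k.val then C (k-1) else (n+2 : ℤ) - C (k-1)
  | (xa j, false) => if Even j.val then 1 + C (j-1) else (n+1 : ℤ) - C (j-1)
  | (xa j, true) => if Even j.val then 1 + C j else (n+1 : ℤ) - C j

lemma psi_lip_up (hn : 2 ≤ n) (hodd : Odd n) (x s : QuaternionGroup n)
    (hs : s ∈ ({1, a 2, xa 0} : Set (QuaternionGroup n))) :
    |psi (x, false) - psi ((s * x : QuaternionGroup n), true)| ≤ 1 := by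
  have hCs := C_step (n := n) hn
  have hCn := C_add_n (n := n) hn
  rcases hs with rfl | rfl | rfl
  · -- s = 1
    rw [one_mul]
    rcases x with k | j
    · have h := hCs (k - 1)
      rw [sub_add_cancel] at h
      simp only [psi, abs_le]
      split_ifs <;> omega
    · have h := hCs (j - 1)
      rw [sub_add_cancel] at h
      simp only [psi, abs_le]
      split_ifs <;> omega
  · -- s = a 2
    rcases x with k | j
    · rw [a_mul_a]
      have hpar : (2 + k).val % 2 = k.val % 2 := by
        rw [val_add_parity, val_two' hn]; omega
      have h := hCs k
      simp only [psi, abs_le, Nat.even_iff,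
        show (2 : ZMod (2*n)) + k - 1 = k + 1 from by ring]
      split_ifs <;> omega
    · rw [a_mul_xa]
      have hpar : (j - 2).val % 2 = j.val % 2 := by
        have := val_add_parity (j - 2) 2
        rw [sub_add_cancel, val_two' hn] at this
        omega
      have h := hCs (j - 2)
      rw [show j - 2 + 1 = j - 1 from by ring] at h
      simp only [psi, abs_le, Nat.even_iff]
      split_ifs <;> omega
  · -- s = xa 0
    rcases x with k | j
    · rw [xa_mul_a, zero_add]
      simp only [psi, abs_le]
      split_ifs <;> omega
    · rw [xa_mul_xa, sub_zero]
      have hpar : ((n : ZMod (2*n)) + j).val % 2 = (n + j.val) % 2 := by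
        rw [val_add_parity, val_n' hn]
      have hodd2 : n % 2 = 1 := Nat.odd_iff.mp hodd
      have h := hCn (j - 1)
      simp only [psi, abs_le, Nat.even_iff,
        show (n : ZMod (2*n)) + j - 1 = (j - 1) + (n : ZMod (2*n)) from by ring, h]
      split_ifs <;> omega

lemma psi_start (hn : 2 ≤ n) : psi ((1 : QuaternionGroup n), false) = 0 := by
  show psi (a 0, false) = 0
  simp only [psi, ZMod.val_zero]
  rw [if_pos Even.zero, C_zero]

lemma psi_end (hn : 2 ≤ n) : psi ((a 1 : QuaternionGroup n), true) = (n : ℤ) + 2 := by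
  simp only [psi, val_one' hn]
  rw [if_neg (by decide), sub_self, C_zero]
  ring

/-- The mod-2 invariant for even `n`. -/
def par : QuaternionGroup n × Bool → ℕ
  | (a k, _) => k.val % 2
  | (xa j, _) => j.val % 2

lemma par_edge (hn : 2 ≤ n) (heven : Even n) (x s : QuaternionGroup n)
    (hs : s ∈ ({1, a 2, xa 0} : Set (QuaternionGroup n))) :
    par (x, false) = par ((s * x : QuaternionGroup n), true) := by
  have he2 : n % 2 = 0 := Nat.even_iff.mp heven
  rcases hs with rfl | rfl | rfl
  · rw [one_mul]; rcases x with k | j <;> rfl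
  · rcases x with k | j
    · rw [a_mul_a]
      show k.val % 2 = (2 + k).val % 2
      rw [val_add_parity, val_two' hn]
      omega
    · rw [a_mul_xa]
      show j.val % 2 = (j - 2).val % 2
      have := val_add_parity (j - 2) 2
      rw [sub_add_cancel, val_two' hn] at this
      omega
  · rcases x with k | j
    · rw [xa_mul_a, zero_add]; rfl
    · rw [xa_mul_xa, sub_zero]
      show j.val % 2 = ((n : ZMod (2*n)) + j).val % 2
      rw [val_add_parity, val_n' hn]
      omega

end Pot

section Upper

variable {n : ℕ}

/-- `good g L`: from any `(x,0)` there is a walk of length `≤ 2L` to `(g*x, 0)`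
in `BCay(Q_{4n}, {1, a, b})`. -/
def good (g : QuaternionGroup n) (L : ℕ) : Prop :=
  ∀ x : QuaternionGroup n,
    ∃ w : (BCay (QuaternionGroup n) {1, a 1, xa 0}).Walk (x, false) (g * x, false),
      w.length ≤ 2 * L

lemma good_one : good (1 : QuaternionGroup n) 0 := fun x =>
  ⟨Walk.nil.copy rfl (by rw [one_mul]), by simp⟩

lemma good_congr {g h : QuaternionGroup n} {L : ℕ} (e : g = h) (hg : good g L) :
    good h L := e ▸ hg

lemma good_mono {g : QuaternionGroup n} {L M : ℕ} (hLM : L ≤ M) (hg : good g L) :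
    good g M := fun x => by
  obtain ⟨w, hw⟩ := hg x
  exact ⟨w, hw.trans (by omega)⟩

lemma good_mul {g h : QuaternionGroup n} {L M : ℕ} (hg : good g L) (hh : good h M) :
    good (g * h) (L + M) := fun x => by
  obtain ⟨w1, hw1⟩ := hh x
  obtain ⟨w2, hw2⟩ := hg (h * x)
  refine ⟨(w1.append w2).copy rfl (by rw [mul_assoc]), ?_⟩
  rw [Walk.length_copy, Walk.length_append]
  omega

lemma good_pair {t s : QuaternionGroup n}
    (ht : t ∈ ({1, a 1, xa 0} : Set (QuaternionGroup n)))
    (hs : s ∈ ({1, a 1, xa 0} : Set (QuaternionGroup n))) :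
    good (t⁻¹ * s) 1 := fun x => by
  have e1 := adj_up hs x
  have e2 := adj_up ht ((t⁻¹ * s) * x)
  rw [show t * (t⁻¹ * s * x) = s * x by group] at e2
  exact ⟨Walk.cons e1 (Walk.cons e2.symm Walk.nil), by simp⟩

lemma good_inv {g : QuaternionGroup n} {L : ℕ} (hg : good g L) : good g⁻¹ L := fun x => by
  obtain ⟨w, hw⟩ := hg (g⁻¹ * x)
  refine ⟨(w.copy rfl (by rw [mul_inv_cancel_left])).reverse, ?_⟩
  rw [Walk.length_reverse, Walk.length_copy]
  exact hw

lemma mem1 : (1 : QuaternionGroup n) ∈ ({1, a 1, xa 0} : Set (QuaternionGroup n)) :=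
  Set.mem_insert _ _

lemma memA : (a 1 : QuaternionGroup n) ∈ ({1, a 1, xa 0} : Set (QuaternionGroup n)) := by
  simp

lemma memB : (xa 0 : QuaternionGroup n) ∈ ({1, a 1, xa 0} : Set (QuaternionGroup n)) := by
  simp

lemma mov_a : good (a 1 : QuaternionGroup n) 1 :=
  good_congr (by rw [inv_one, one_mul]) (good_pair mem1 memA)

lemma mov_a' : good (a (-1) : QuaternionGroup n) 1 :=
  good_congr (by rw [mul_one]; rfl) (good_pair memA mem1)

lemma mov_b : good (xa 0 : QuaternionGroup n) 1 :=
  good_congr (by rw [inv_one, one_mul]) (good_pair mem1 memB)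

lemma mov_b' : good (xa (n : ZMod (2*n)) : QuaternionGroup n) 1 := by
  have := good_pair (n := n) memB mem1
  rw [mul_one] at this
  exact good_congr (by show xa ((n : ZMod (2*n)) + 0) = _; rw [add_zero]) this

lemma mov_ab : good (xa 1 : QuaternionGroup n) 1 := by
  have := good_pair (n := n) memA memB
  rw [show ((a 1 : QuaternionGroup n)⁻¹ * xa 0) = xa 1 from by
    show a (-1) * xa 0 = xa 1
    rw [a_mul_xa, zero_sub, neg_neg]] at this
  exact this

lemma mov_ba : good (xa ((n : ZMod (2*n)) + 1) : QuaternionGroup n) 1 := by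
  have := good_pair (n := n) memB memA
  rw [show ((xa 0 : QuaternionGroup n)⁻¹ * a 1) = xa ((n : ZMod (2*n)) + 1) from by
    show xa ((n : ZMod (2*n)) + 0) * a 1 = _
    rw [xa_mul_a, add_zero]] at this
  exact this

lemma gApow : ∀ j : ℕ, good (a (j : ZMod (2*n)) : QuaternionGroup n) j := by
  intro j
  induction j with
  | zero => exact good_congr (by rw [one_def]; norm_num) good_one
  | succ j ih =>
      have := good_mul mov_a ih
      rw [a_mul_a] at this
      refine good_congr ?_ (good_mono (by omega) this)
      push_cast
      ring_nf

lemma gApow' : ∀ j : ℕ, good (a (-(j : ZMod (2*n))) : QuaternionGroup n) j := fun j =>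
  good_congr (by rfl) (good_inv (gApow j))

lemma B2 : good (a (n : ZMod (2*n)) : QuaternionGroup n) 2 := by
  have := good_mul (mov_b' (n := n)) (mov_b' (n := n))
  rw [xa_mul_xa] at this
  exact good_congr (by ring_nf) this

lemma R2 (j : ℕ) (hj : 1 ≤ j) :
    good (a ((n : ZMod (2*n)) - (j : ZMod (2*n))) : QuaternionGroup n) (j + 1) := by
  have h1 := good_mul (mov_ba (n := n)) (gApow (j - 1))
  rw [xa_mul_a] at h1
  have h2 := good_mul h1 (mov_b' (n := n))
  rw [xa_mul_xa] at h2
  refine good_congr ?_ (good_mono (by omega) h2)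
  have : ((j - 1 : ℕ) : ZMod (2*n)) = (j : ZMod (2*n)) - 1 := by
    push_cast [Nat.cast_sub hj]; ring
  rw [this]
  ring

lemma neg_n_eq : (-(n : ZMod (2*n))) = (n : ZMod (2*n)) := by
  have h := ZMod.natCast_self (2*n)
  push_cast at h
  linear_combination -h

lemma R2' (j : ℕ) (hj : 1 ≤ j) :
    good (a ((n : ZMod (2*n)) + (j : ZMod (2*n))) : QuaternionGroup n) (j + 1) := by
  have := good_inv (R2 (n := n) j hj)
  refine good_congr ?_ this
  show a (-((n : ZMod (2*n)) - (j : ZMod (2*n)))) = _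
  rw [neg_sub, sub_eq_add_neg, neg_n_eq]
  ring

end Upper


section Claims

variable {n : ℕ} [NeZero (2 * n)]

lemma gX {d e : ZMod (2*n)} {L : ℕ} (hd : good (a d : QuaternionGroup n) L)
    (he : good (xa e : QuaternionGroup n) 1) : good (xa (e - d) : QuaternionGroup n) (L + 1) := by
  have := good_mul hd he
  rwa [a_mul_xa] at this

lemma hkval (k : ZMod (2*n)) : ((k.val : ℕ) : ZMod (2*n)) = k := by
  rw [ZMod.natCast_val, ZMod.cast_id]

lemma cast_sub_val {v w : ℕ} (h : w ≤ v) :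
    ((v - w : ℕ) : ZMod (2*n)) = (v : ZMod (2*n)) - (w : ZMod (2*n)) := by
  push_cast [Nat.cast_sub h]; ring

lemma claimA (hn : 2 ≤ n) (hodd : Odd n) (g : QuaternionGroup n) :
    ∃ L, 2 * L ≤ n + 1 ∧ good g L := by
  obtain ⟨m, hm⟩ := hodd
  rcases g with k | i
  · have hv := ZMod.val_lt k
    set v := k.val with hvdef
    have hk : ((v : ℕ) : ZMod (2*n)) = k := hkval k
    by_cases h1 : 2 * v ≤ n + 1
    · exact ⟨v, h1, good_congr (by rw [hk]) (gApow v)⟩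
    by_cases h2 : 2 * (2*n - v) ≤ n + 1
    · refine ⟨2*n - v, h2, good_congr ?_ (gApow' (2*n - v))⟩
      congr 1
      rw [cast_sub_val (le_of_lt hv), ZMod.natCast_self, hk]
      ring
    rcases lt_trichotomy v n with h3 | h3 | h3
    · refine ⟨(n - v) + 1, by omega, good_congr ?_ (R2 (n - v) (by omega))⟩
      congr 1
      rw [cast_sub_val (by omega : v ≤ n), hk]
      ring
    · exact ⟨2, by omega, good_congr (by rw [← hk, h3]) B2⟩
    · refine ⟨(v - n) + 1, by omega, good_congr ?_ (R2' (v - n) (by omega))⟩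
      congr 1
      rw [cast_sub_val (by omega : n ≤ v), hk]
      ring
  · have hv := ZMod.val_lt i
    set v := i.val with hvdef
    have hk : ((v : ℕ) : ZMod (2*n)) = i := hkval i
    by_cases h1 : 2 * v + 2 ≤ n + 1
    · refine ⟨v + 1, by omega, good_congr ?_ (gX (gApow' v) mov_b)⟩
      congr 1
      rw [zero_sub, neg_neg, hk]
    by_cases h2 : 2 * (2*n - v) + 2 ≤ n + 1
    · refine ⟨(2*n - v) + 1, by omega, good_congr ?_ (gX (gApow (2*n - v)) mov_b)⟩
      congr 1
      rw [zero_sub, cast_sub_val (le_of_lt hv), ZMod.natCast_self, hk]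
      ring
    rcases le_or_gt v n with h3 | h3
    · refine ⟨(n - v) + 1, by omega, good_congr ?_ (gX (gApow (n - v)) mov_b')⟩
      congr 1
      rw [cast_sub_val h3, hk]
      ring
    · refine ⟨(v - n) + 1, by omega, good_congr ?_ (gX (gApow' (v - n)) mov_b')⟩
      congr 1
      rw [cast_sub_val (le_of_lt h3), hk]
      ring

lemma claimB (hn : 2 ≤ n) (hodd : Odd n) (g : QuaternionGroup n) :
    ∃ s ∈ ({1, a 1, xa 0} : Set (QuaternionGroup n)), ∃ L, 2 * L + 1 ≤ n ∧
      good (s⁻¹ * g) L := by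
  obtain ⟨m, hm⟩ := hodd
  rcases g with k | i
  · have hv := ZMod.val_lt k
    set v := k.val with hvdef
    have hk : ((v : ℕ) : ZMod (2*n)) = k := hkval k
    by_cases h1 : 2 * v + 1 ≤ n
    · refine ⟨1, mem1, v, h1, ?_⟩
      rw [inv_one, one_mul]
      exact good_congr (by rw [hk]) (gApow v)
    by_cases h2 : 2 * (2*n - v) + 1 ≤ n
    · refine ⟨1, mem1, 2*n - v, h2, ?_⟩
      rw [inv_one, one_mul]
      refine good_congr ?_ (gApow' (2*n - v))
      congr 1
      rw [cast_sub_val (le_of_lt hv), ZMod.natCast_self, hk]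
      ring
    by_cases h3 : 2 * v = n + 1
    · refine ⟨a 1, memA, v - 1, by omega, ?_⟩
      have : (a 1 : QuaternionGroup n)⁻¹ * a k = a (k - 1) := by
        show a (-1) * a k = _
        rw [a_mul_a]; ring_nf
      rw [this]
      refine good_congr ?_ (gApow (v - 1))
      congr 1
      rw [cast_sub_val (by omega : 1 ≤ v), hk]
      push_cast
      ring
    rcases lt_trichotomy v n with h4 | h4 | h4
    · refine ⟨1, mem1, (n - v) + 1, by omega, ?_⟩
      rw [inv_one, one_mul]
      refine good_congr ?_ (R2 (n - v) (by omega))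
      congr 1
      rw [cast_sub_val (by omega : v ≤ n), hk]
      ring
    · -- v = n : use s = xa 0, b⁻¹ * a n = xa 0
      refine ⟨xa 0, memB, 1, by omega, ?_⟩
      have : (xa 0 : QuaternionGroup n)⁻¹ * a k = xa 0 := by
        show xa ((n : ZMod (2*n)) + 0) * a k = _
        rw [xa_mul_a, add_zero, ← hk, h4]
        congr 1
        have h := ZMod.natCast_self (2*n)
        push_cast at h
        linear_combination h
      rw [this]
      exact mov_b
    by_cases h5 : 2 * v + 3 ≤ 3*n
    · refine ⟨1, mem1, (v - n) + 1, by omega, ?_⟩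
      rw [inv_one, one_mul]
      refine good_congr ?_ (R2' (v - n) (by omega))
      congr 1
      rw [cast_sub_val (by omega : n ≤ v), hk]
      ring
    · -- 2v = 3n - 1 : s = xa 0, target xa (n + k), route a (-(m-1)) * xa 1
      have h6 : 2 * v = 3 * n - 1 := by omega
      have hm1 : 1 ≤ m := by omega
      refine ⟨xa 0, memB, (m - 1) + 1, by omega, ?_⟩
      have hstep : (xa 0 : QuaternionGroup n)⁻¹ * a k = xa ((n : ZMod (2*n)) + k) := by
        show xa ((n : ZMod (2*n)) + 0) * a k = _
        rw [xa_mul_a, add_zero]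
      rw [hstep]
      refine good_congr ?_ (gX (gApow' (m - 1)) (mov_ab (n := n)))
      congr 1
      rw [sub_neg_eq_add, ← hk, cast_sub_val hm1]
      have hnat : (n : ℕ) + v = m + 2*n := by omega
      have hz := congrArg (Nat.cast : ℕ → ZMod (2*n)) hnat
      have h2n : ((2*n : ℕ) : ZMod (2*n)) = 0 := ZMod.natCast_self _
      push_cast at hz h2n ⊢
      linear_combination -hz - h2n
  · have hv := ZMod.val_lt i
    set v := i.val with hvdef
    have hk : ((v : ℕ) : ZMod (2*n)) = i := hkval i
    have hbinv : ∀ j : ZMod (2*n), (xa 0 : QuaternionGroup n)⁻¹ * xa j = a j := by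
      intro j
      show xa ((n : ZMod (2*n)) + 0) * xa j = _
      rw [add_zero, xa_mul_xa]
      congr 1
      ring
    by_cases h1 : 2 * v + 1 ≤ n
    · refine ⟨xa 0, memB, v, h1, ?_⟩
      rw [hbinv]
      exact good_congr (by rw [hk]) (gApow v)
    by_cases h2 : 2 * (2*n - v) + 1 ≤ n
    · refine ⟨xa 0, memB, 2*n - v, h2, ?_⟩
      rw [hbinv]
      refine good_congr ?_ (gApow' (2*n - v))
      congr 1
      rw [cast_sub_val (le_of_lt hv), ZMod.natCast_self, hk]
      ring
    by_cases h3 : 2 * v = n + 1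
    · -- s = a 1, xa (i+1) = a (n-v-1) * xa n
      refine ⟨a 1, memA, (n - v - 1) + 1, by omega, ?_⟩
      have : (a 1 : QuaternionGroup n)⁻¹ * xa i = xa (i + 1) := by
        show a (-1) * xa i = _
        rw [a_mul_xa, sub_neg_eq_add]
      rw [this]
      have := gX (gApow (n - v - 1)) (mov_b' (n := n))
      refine good_congr ?_ this
      congr 1
      rw [cast_sub_val (by omega : 1 ≤ n - v), cast_sub_val (by omega : v ≤ n), hk]
      ring
    rcases lt_trichotomy v n with h4 | h4 | h4
    · refine ⟨xa 0, memB, (n - v) + 1, by omega, ?_⟩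
      rw [hbinv]
      refine good_congr ?_ (R2 (n - v) (by omega))
      congr 1
      rw [cast_sub_val (by omega : v ≤ n), hk]
      ring
    · refine ⟨1, mem1, 1, by omega, ?_⟩
      rw [inv_one, one_mul]
      exact good_congr (by rw [← hk, h4]) mov_b'
    by_cases h5 : v = n + 1
    · refine ⟨1, mem1, 1, by omega, ?_⟩
      rw [inv_one, one_mul]
      refine good_congr ?_ (mov_ba (n := n))
      congr 1
      rw [← hk, h5]
      push_cast
      ring
    by_cases h6 : 2 * v + 3 ≤ 3*n
    · refine ⟨xa 0, memB, (v - n) + 1, by omega, ?_⟩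
      rw [hbinv]
      refine good_congr ?_ (R2' (v - n) (by omega))
      congr 1
      rw [cast_sub_val (by omega : n ≤ v), hk]
      ring
    · -- 2v = 3n-1 : s = 1, xa i = a (-(v-n-1)) * xa (n+1)
      refine ⟨1, mem1, (v - n - 1) + 1, by omega, ?_⟩
      rw [inv_one, one_mul]
      have := gX (gApow' (v - n - 1)) (mov_ba (n := n))
      refine good_congr ?_ this
      congr 1
      rw [sub_neg_eq_add, cast_sub_val (by omega : 1 ≤ v - n), cast_sub_val (by omega : n ≤ v), hk]
      push_cast
      ring

lemma claimA_weak (g : QuaternionGroup n) : ∃ L, good g L := by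
  rcases g with k | i
  · exact ⟨k.val, good_congr (by rw [hkval]) (gApow k.val)⟩
  · refine ⟨i.val + 1, good_congr ?_ (gX (gApow' i.val) mov_b)⟩
    congr 1
    rw [zero_sub, neg_neg, hkval]

end Claims


section Master

open SimpleGraph

variable {n : ℕ} [NeZero (2 * n)]

lemma walk_of_good {g : QuaternionGroup n} {L : ℕ} (h : good g L) :
    ∃ w : (BCay (QuaternionGroup n) {1, a 1, xa 0}).Walk
      ((1 : QuaternionGroup n), false) (g, false), w.length ≤ 2 * L := by
  obtain ⟨w, hw⟩ := h 1
  exact ⟨w.copy rfl (by rw [mul_one]), by rwa [Walk.length_copy]⟩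

lemma walk_to_true {g s : QuaternionGroup n} {L : ℕ}
    (hs : s ∈ ({1, a 1, xa 0} : Set (QuaternionGroup n))) (h : good (s⁻¹ * g) L) :
    ∃ w : (BCay (QuaternionGroup n) {1, a 1, xa 0}).Walk
      ((1 : QuaternionGroup n), false) (g, true), w.length ≤ 2 * L + 1 := by
  obtain ⟨w, hw⟩ := walk_of_good h
  have e := adj_up hs (s⁻¹ * g)
  rw [mul_inv_cancel_left] at e
  exact ⟨w.concat e, by rw [Walk.length_concat]; omega⟩

lemma transfer {z : QuaternionGroup n} {b b' : Bool} {m : ℕ} (x : QuaternionGroup n)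
    (h : ∃ w : (BCay (QuaternionGroup n) {1, a 1, xa 0}).Walk
      ((1 : QuaternionGroup n), b) (z, b'), w.length ≤ m) :
    ∃ w : (BCay (QuaternionGroup n) {1, a 1, xa 0}).Walk (x, b) ((z * x : QuaternionGroup n), b'),
      w.length ≤ m := by
  obtain ⟨w, hw⟩ := h
  obtain ⟨w', hl⟩ := walk_iso (shift _ x) w
  refine ⟨w'.copy ?_ ?_, by rwa [Walk.length_copy, hl]⟩
  · show ((1 * x : QuaternionGroup n), b) = (x, b)
    rw [one_mul]
  · rfl

lemma master_odd (hn : 2 ≤ n) (hodd : Odd n) (u v : QuaternionGroup n × Bool) :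
    ∃ w : (BCay (QuaternionGroup n) {1, a 1, xa 0}).Walk u v, w.length ≤ n + 1 := by
  have Hff : ∀ z : QuaternionGroup n,
      ∃ w : (BCay (QuaternionGroup n) {1, a 1, xa 0}).Walk
        ((1 : QuaternionGroup n), false) (z, false), w.length ≤ n + 1 := by
    intro z
    obtain ⟨L, hL, hg⟩ := claimA hn hodd z
    obtain ⟨w, hw⟩ := walk_of_good hg
    exact ⟨w, by omega⟩
  have Hft : ∀ z : QuaternionGroup n,
      ∃ w : (BCay (QuaternionGroup n) {1, a 1, xa 0}).Walk
        ((1 : QuaternionGroup n), false) (z, true), w.length ≤ n := by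
    intro z
    obtain ⟨s, hs, L, hL, hg⟩ := claimB hn hodd z
    obtain ⟨w, hw⟩ := walk_to_true hs hg
    exact ⟨w, by omega⟩
  obtain ⟨x, bx⟩ := u
  obtain ⟨y, by'⟩ := v
  have fix : ∀ b : Bool, (y * x⁻¹ * x, b) = (y, b) := by
    intro b; rw [inv_mul_cancel_right]
  cases bx
  · cases by'
    · obtain ⟨w, hw⟩ := transfer x (Hff (y * x⁻¹))
      exact ⟨w.copy rfl (fix false), by rwa [Walk.length_copy]⟩
    · obtain ⟨w, hw⟩ := transfer x (Hft (y * x⁻¹))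
      exact ⟨w.copy rfl (fix true), by rw [Walk.length_copy]; omega⟩
  · cases by'
    · -- (x, true) to (y, false): reverse of (y,false) → (x,true)
      obtain ⟨w, hw⟩ := transfer y (Hft (x * y⁻¹))
      have fix2 : (x * y⁻¹ * y, true) = (x, true) := by rw [inv_mul_cancel_right]
      exact ⟨(w.copy rfl fix2).reverse, by
        rw [Walk.length_reverse, Walk.length_copy]; omega⟩
    · -- (x,true) to (y,true): step down to (x,false) then go
      obtain ⟨w, hw⟩ := transfer x (Hft (y * x⁻¹))
      have e : (BCay (QuaternionGroup n) {1, a 1, xa 0}).Adj (x, false) (x, true) := by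
        have := adj_up (mem1 (n := n)) x
        rwa [one_mul] at this
      refine ⟨Walk.cons e.symm (w.copy rfl (fix true)), ?_⟩
      rw [Walk.length_cons, Walk.length_copy]
      omega

lemma master_even (u v : QuaternionGroup n × Bool) :
    Nonempty ((BCay (QuaternionGroup n) {1, a 1, xa 0}).Walk u v) := by
  have Hff : ∀ z : QuaternionGroup n,
      Nonempty ((BCay (QuaternionGroup n) {1, a 1, xa 0}).Walk
        ((1 : QuaternionGroup n), false) (z, false)) := by
    intro z
    obtain ⟨L, hg⟩ := claimA_weak z
    obtain ⟨w, -⟩ := walk_of_good hg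
    exact ⟨w⟩
  have Hft : ∀ z : QuaternionGroup n,
      Nonempty ((BCay (QuaternionGroup n) {1, a 1, xa 0}).Walk
        ((1 : QuaternionGroup n), false) (z, true)) := by
    intro z
    obtain ⟨L, hg⟩ := claimA_weak ((1 : QuaternionGroup n)⁻¹ * z)
    obtain ⟨w, -⟩ := walk_to_true mem1 hg
    exact ⟨w⟩
  have T : ∀ (z x : QuaternionGroup n) (b : Bool),
      Nonempty ((BCay (QuaternionGroup n) {1, a 1, xa 0}).Walk (x, false)
        ((z * x : QuaternionGroup n), b)) := by
    intro z x b
    cases b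
    · obtain ⟨w⟩ := Hff z
      obtain ⟨w', -⟩ := transfer x ⟨w, le_refl _⟩
      exact ⟨w'⟩
    · obtain ⟨w⟩ := Hft z
      obtain ⟨w', -⟩ := transfer x ⟨w, le_refl _⟩
      exact ⟨w'⟩
  obtain ⟨x, bx⟩ := u
  obtain ⟨y, by'⟩ := v
  have fix : ∀ b : Bool, (y * x⁻¹ * x, b) = (y, b) := by
    intro b; rw [inv_mul_cancel_right]
  cases bx
  · obtain ⟨w⟩ := T (y * x⁻¹) x by'
    exact ⟨w.copy rfl (fix by')⟩
  · obtain ⟨w⟩ := T (x * y⁻¹) y true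
    have fix2 : (x * y⁻¹ * y, true) = (x, true) := by rw [inv_mul_cancel_right]
    cases by'
    · exact ⟨(w.copy rfl fix2).reverse⟩
    · obtain ⟨w2⟩ := T (y * x⁻¹) x true
      have e : (BCay (QuaternionGroup n) {1, a 1, xa 0}).Adj (x, false) (x, true) := by
        have := adj_up (mem1 (n := n)) x
        rwa [one_mul] at this
      exact ⟨Walk.cons e.symm (w2.copy rfl (fix true))⟩

end Master


section Final

open SimpleGraph

variable {n : ℕ} [NeZero (2 * n)]

lemma psi_lip (hn : 2 ≤ n) (hodd : Odd n) :
    ∀ ⦃u v : QuaternionGroup n × Bool⦄,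
      (BCay (QuaternionGroup n) {1, a 2, xa 0}).Adj u v → |psi u - psi v| ≤ 1 := by
  rintro ⟨u1, u2⟩ ⟨v1, v2⟩ h
  rcases adj_elim h with ⟨s, hs, h2, h3, h4⟩ | ⟨s, hs, h2, h3, h4⟩ <;>
    simp only at h2 h3 h4 <;> subst h2 <;> subst h3 <;> subst h4
  · exact psi_lip_up hn hodd u1 s hs
  · rw [abs_sub_comm]
    exact psi_lip_up hn hodd v1 s hs

lemma par_lip (hn : 2 ≤ n) (heven : Even n) :
    ∀ ⦃u v : QuaternionGroup n × Bool⦄,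
      (BCay (QuaternionGroup n) {1, a 2, xa 0}).Adj u v → par u = par v := by
  rintro ⟨u1, u2⟩ ⟨v1, v2⟩ h
  rcases adj_elim h with ⟨s, hs, h2, h3, h4⟩ | ⟨s, hs, h2, h3, h4⟩ <;>
    simp only at h2 h3 h4 <;> subst h2 <;> subst h3 <;> subst h4
  · exact par_edge hn heven u1 s hs
  · exact (par_edge hn heven v1 s hs).symm

end Final

end BCayAux


theorem stmt_10 (n : ℕ) (hn : 2 ≤ n) :
    ¬ Nonempty
        (BCay (QuaternionGroup n) {1, QuaternionGroup.a 1, QuaternionGroup.xa 0} ≃g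
          BCay (QuaternionGroup n) {1, QuaternionGroup.a 2, QuaternionGroup.xa 0}) := by
  haveI : NeZero (2 * n) := ⟨by omega⟩
  rintro ⟨φ⟩
  rcases Nat.even_or_odd n with he | ho
  · -- even case : parity invariant vs connectivity
    obtain ⟨w⟩ := BCayAux.master_even
      (φ.symm ((1 : QuaternionGroup n), false)) (φ.symm (QuaternionGroup.a 1, true))
    obtain ⟨w', -⟩ := BCayAux.walk_iso φ w
    have hinv := BCayAux.invariant_bound BCayAux.par (BCayAux.par_lip hn he)
      (w'.copy (φ.apply_symm_apply ((1 : QuaternionGroup n), false))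
        (φ.apply_symm_apply (QuaternionGroup.a 1, true)))
    have h0 : BCayAux.par ((1 : QuaternionGroup n), false) = 0 := by
      show (0 : ZMod (2*n)).val % 2 = 0
      rw [ZMod.val_zero]
    have h1 : BCayAux.par ((QuaternionGroup.a 1 : QuaternionGroup n), true) = 1 := by
      show (1 : ZMod (2*n)).val % 2 = 1
      rw [BCayAux.val_one' hn]
    rw [h0, h1] at hinv
    exact absurd hinv (by norm_num)
  · -- odd case : diameter n+1 vs distance n+2
    obtain ⟨w, hw⟩ := BCayAux.master_odd hn ho
      (φ.symm ((1 : QuaternionGroup n), false)) (φ.symm (QuaternionGroup.a 1, true))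
    obtain ⟨w', hl⟩ := BCayAux.walk_iso φ w
    have hpot := BCayAux.potential_bound BCayAux.psi (BCayAux.psi_lip hn ho)
      (w'.copy (φ.apply_symm_apply ((1 : QuaternionGroup n), false))
        (φ.apply_symm_apply (QuaternionGroup.a 1, true)))
    rw [BCayAux.psi_start hn, BCayAux.psi_end hn, SimpleGraph.Walk.length_copy, hl] at hpot
    have habs : |(0 : ℤ) - ((n : ℤ) + 2)| = (n : ℤ) + 2 := by
      rw [zero_sub, abs_neg, abs_of_nonneg]
      positivity
    rw [habs] at hpot
    omega
end

section
/- For even n ≥ 2, the adjacency matrix of BCay(Q_{4n}, {1, a², b}) has eigenvalue 3 with multiplicity at least 2, while the adjacency matrix of BCay(Q_{4n}, {1, a, b}) has eigenvalue 3 with multiplicity exactly 1. -/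
/-- The complex adjacency matrix of the bi-Cayley graph `BCay(Q_{4n}, S)`. -/
noncomputable def bcayAdjMatrix (n : ℕ) [NeZero n] (S : Set (QuaternionGroup n)) :
    Matrix (QuaternionGroup n × Bool) (QuaternionGroup n × Bool) ℂ :=
  letI := Classical.decRel (BCay (QuaternionGroup n) S).Adj
  SimpleGraph.adjMatrix ℂ (BCay (QuaternionGroup n) S)

set_option linter.unusedSectionVars false

open Polynomial Matrix

variable {m : Type*} [Fintype m] [DecidableEq m]

lemma charpoly_unitary_conj (U : Matrix.unitaryGroup m ℂ) (B : Matrix m m ℂ) :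
    ((U : Matrix m m ℂ) * B * (star U : Matrix m m ℂ)).charpoly = B.charpoly := by
  have hU : (U : Matrix m m ℂ) * (star U : Matrix m m ℂ) = 1 :=
    (Matrix.mem_unitaryGroup_iff).mp U.2
  set f : ℂ →+* ℂ[X] := (C : ℂ →+* ℂ[X])
  have hmap : ((U : Matrix m m ℂ).map f) * ((star U : Matrix m m ℂ).map f) = 1 := by
    rw [← Matrix.map_mul, hU, Matrix.map_one f (map_zero f) (map_one f)]
  have hscal : ((U : Matrix m m ℂ).map f) * (Matrix.scalar m (X : ℂ[X])) *
      ((star U : Matrix m m ℂ).map f) = Matrix.scalar m (X : ℂ[X]) := by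
    have := (Matrix.scalar_commute (n := m) (X : ℂ[X]) (fun r => Commute.all _ _) (((U : Matrix m m ℂ)).map f)).symm
    rw [this, Matrix.mul_assoc, hmap, Matrix.mul_one]
  have hcm : charmatrix ((U : Matrix m m ℂ) * B * (star U : Matrix m m ℂ)) =
      ((U : Matrix m m ℂ).map f) * charmatrix B * ((star U : Matrix m m ℂ).map f) := by
    rw [charmatrix, charmatrix]
    rw [Matrix.mul_sub, Matrix.sub_mul, hscal]
    congr 1
    simp only [RingHom.mapMatrix_apply, f]
    rw [Matrix.map_mul, Matrix.map_mul]
  have hdet : ((U : Matrix m m ℂ).map f).det * ((star U : Matrix m m ℂ).map f).det = 1 := by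
    rw [← det_mul, hmap, det_one]
  rw [Matrix.charpoly, hcm, det_mul, det_mul, Matrix.charpoly]
  rw [mul_comm (((U : Matrix m m ℂ)).map f).det _, mul_assoc, hdet, mul_one]

lemma charpoly_diagonal' (d : m → ℂ) :
    (Matrix.diagonal d).charpoly = ∏ i, (X - C (d i)) := by
  have : charmatrix (Matrix.diagonal d) = Matrix.diagonal (fun i => (X : ℂ[X]) - C (d i)) := by
    ext i j
    by_cases h : i = j
    · subst h; simp [charmatrix_apply_eq]
    · rw [charmatrix_apply_ne _ _ _ h, Matrix.diagonal_apply_ne _ h, Matrix.diagonal_apply_ne _ h,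
        map_zero, neg_zero]
  rw [Matrix.charpoly, this, det_diagonal]

lemma herm_charpoly (A : Matrix m m ℂ) (hA : A.IsHermitian) :
    A.charpoly = ∏ i, (X - C ((hA.eigenvalues i : ℝ) : ℂ)) := by
  conv_lhs => rw [hA.spectral_theorem]
  rw [Unitary.conjStarAlgAut_apply, charpoly_unitary_conj hA.eigenvectorUnitary, charpoly_diagonal']
  rfl

lemma prod_X_sub_C_rootMultiplicity (c : m → ℂ) (r : ℂ) :
    (∏ i, (X - C (c i))).rootMultiplicity r = Fintype.card {i // c i = r} := by
  classical
  have hp : (∏ i, (X - C (c i))) = (Multiset.map (fun a => X - C a) (Finset.univ.val.map c)).prod := by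
    rw [Multiset.map_map, ← Finset.prod_eq_multiset_prod]
    rfl
  have hne : (∏ i, (X - C (c i))) ≠ 0 := by
    apply Finset.prod_ne_zero_iff.mpr
    intro i _
    exact X_sub_C_ne_zero (c i)
  rw [← Polynomial.count_roots, hp, Polynomial.roots_multiset_prod_X_sub_C,
    Multiset.count_map, Fintype.card_subtype]
  congr 1
  rw [Finset.filter_val]
  congr 1
  ext i
  exact eq_comm

lemma herm_rank_sub_smul (A : Matrix m m ℂ) (hA : A.IsHermitian) (r : ℝ) :
    (A - (r : ℂ) • 1).rank = Fintype.card {i // ((hA.eigenvalues i : ℝ) : ℂ) ≠ (r : ℂ)} := by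
  set U : Matrix m m ℂ := (hA.eigenvectorUnitary : Matrix m m ℂ)
  have hU : U * star U = 1 := (Matrix.mem_unitaryGroup_iff).mp hA.eigenvectorUnitary.2
  have hdetU : IsUnit U.det :=
    IsUnit.of_mul_eq_one (star U).det (by rw [← det_mul, hU, det_one])
  have hU' : star U * U = 1 := (Matrix.mem_unitaryGroup_iff').mp hA.eigenvectorUnitary.2
  have hdetU' : IsUnit (star U).det :=
    IsUnit.of_mul_eq_one U.det (by rw [← det_mul, hU', det_one])
  have key : A - (r : ℂ) • 1 =
      U * (Matrix.diagonal (fun i => ((hA.eigenvalues i : ℝ) : ℂ) - (r : ℂ))) * star U := by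
    have h1 : (r : ℂ) • (1 : Matrix m m ℂ) = U * ((r : ℂ) • 1) * star U := by
      rw [Matrix.mul_smul, Matrix.mul_one, Matrix.smul_mul, hU]
    conv_lhs => rw [hA.spectral_theorem, h1]
    rw [Unitary.conjStarAlgAut_apply, ← Matrix.sub_mul, ← Matrix.mul_sub]
    congr 2
    rw [Matrix.smul_one_eq_diagonal, Matrix.diagonal_sub]
    rfl
  rw [key, Matrix.rank_mul_eq_left_of_isUnit_det (star U) _ hdetU',
    Matrix.rank_mul_eq_right_of_isUnit_det U _ hdetU, Matrix.rank_diagonal]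
  exact Fintype.card_congr (Equiv.subtypeEquivRight (fun i => by rw [sub_ne_zero]))

lemma rank_add_nullity (M : Matrix m m ℂ) :
    M.rank + Module.finrank ℂ (LinearMap.ker M.mulVecLin) = Fintype.card m := by
  have := LinearMap.finrank_range_add_finrank_ker M.mulVecLin
  rw [Module.finrank_pi] at this
  exact this

lemma herm_rootMultiplicity (A : Matrix m m ℂ) (hA : A.IsHermitian) (r : ℝ) :
    A.charpoly.rootMultiplicity (r : ℂ) =
      Module.finrank ℂ (LinearMap.ker (A - (r : ℂ) • 1).mulVecLin) := by
  classical
  have h1 : A.charpoly.rootMultiplicity (r : ℂ) =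
      Fintype.card {i // ((hA.eigenvalues i : ℝ) : ℂ) = (r : ℂ)} := by
    rw [herm_charpoly A hA, prod_X_sub_C_rootMultiplicity]
  have h2 := herm_rank_sub_smul A hA r
  have h3 := rank_add_nullity (A - (r : ℂ) • 1)
  have h4 : Fintype.card {i // ((hA.eigenvalues i : ℝ) : ℂ) = (r : ℂ)} +
      Fintype.card {i // ((hA.eigenvalues i : ℝ) : ℂ) ≠ (r : ℂ)} = Fintype.card m := by
    rw [Fintype.card_subtype_compl]
    have hle : Fintype.card {i // ((hA.eigenvalues i : ℝ) : ℂ) = (r : ℂ)} ≤ Fintype.card m :=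
      Fintype.card_subtype_le _
    omega
  omega



variable {V : Type*} [Fintype V] [DecidableEq V]

lemma lap_eq (G : SimpleGraph V) [DecidableRel G.Adj] (hdeg : ∀ v, G.degree v = 3) :
    G.lapMatrix ℝ = (3 : ℝ) • 1 - G.adjMatrix ℝ := by
  unfold SimpleGraph.lapMatrix SimpleGraph.degMatrix
  congr 1
  ext i j
  by_cases h : i = j
  · subst h; simp [hdeg]
  · simp [Matrix.diagonal_apply_ne _ h, Matrix.one_apply_ne h]

lemma ker_eigen_iff (G : SimpleGraph V) [DecidableRel G.Adj] (hdeg : ∀ v, G.degree v = 3)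
    (x : V → ℂ) :
    G.adjMatrix ℂ *ᵥ x = (3 : ℂ) • x ↔ ∀ u v, G.Reachable u v → x u = x v := by
  constructor
  · intro h
    have hreal : ∀ y : V → ℂ, G.adjMatrix ℂ *ᵥ y = (3 : ℂ) • y →
        ∀ u v, G.Reachable u v → (y u).re = (y v).re := by
      intro y hy u v huv
      have hre : G.adjMatrix ℝ *ᵥ (fun w => (y w).re) = (3 : ℝ) • (fun w => (y w).re) := by
        funext w
        have hw := congrFun hy w
        simp only [Matrix.mulVec, dotProduct, SimpleGraph.adjMatrix_apply,
          Pi.smul_apply, smul_eq_mul, ite_mul, one_mul, zero_mul] at hw ⊢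
        have h3 : (3 : ℂ) = ((3 : ℝ) : ℂ) := by norm_num
        rw [h3] at hw
        have := congrArg Complex.re hw
        rw [Complex.re_sum, Complex.re_ofReal_mul] at this
        simpa [apply_ite Complex.re] using this
      have h0 : Matrix.toLin' (G.lapMatrix ℝ) (fun w => (y w).re) = 0 := by
        rw [Matrix.toLin'_apply, lap_eq G hdeg, Matrix.sub_mulVec,
          Matrix.smul_mulVec, Matrix.one_mulVec, hre, sub_self]
      exact (SimpleGraph.lapMatrix_mulVec_eq_zero_iff_forall_reachable G).mp h0 u v huv
    intro u v huv
    have h1 := hreal x h u v huv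
    have h2 := hreal ((-Complex.I) • x) (by rw [Matrix.mulVec_smul, h, smul_comm]) u v huv
    simp only [Pi.smul_apply, smul_eq_mul, Complex.neg_re, Complex.mul_re, Complex.I_re,
      Complex.I_im, zero_mul, one_mul, zero_sub, neg_neg] at h2
    exact Complex.ext h1 (by simpa using h2)
  · intro hx
    funext v
    rw [SimpleGraph.adjMatrix_mulVec_apply]
    have : ∀ u ∈ G.neighborFinset v, x u = x v := fun u hu =>
      (hx v u ((G.mem_neighborFinset v u).mp hu).reachable).symm
    rw [Finset.sum_congr rfl this, Finset.sum_const, G.card_neighborFinset_eq_degree, hdeg]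
    simp

section Adj
variable {G : Type*} [Group G] [Fintype G] [DecidableEq G]

lemma bcay_adj_iff (S : Set G) (u v : G × Bool) :
    (BCay G S).Adj u v ↔
      (u.2 = false ∧ v.2 = true ∧ ∃ s ∈ S, v.1 = s * u.1) ∨
      (v.2 = false ∧ u.2 = true ∧ ∃ s ∈ S, u.1 = s * v.1) := by
  rw [BCay, SimpleGraph.fromRel_adj]
  constructor
  · rintro ⟨-, h⟩; exact h
  · intro h
    refine ⟨?_, h⟩
    rcases h with ⟨h1, h2, -⟩ | ⟨h1, h2, -⟩ <;> intro he <;> subst he <;>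
      rw [h1] at h2 <;> exact Bool.noConfusion h2

variable {s₁ s₂ s₃ : G} (h12 : s₁ ≠ s₂) (h13 : s₁ ≠ s₃) (h23 : s₂ ≠ s₃)

lemma bcay_neighborFinset_false [DecidableRel (BCay G {s₁, s₂, s₃}).Adj] (x : G) :
    (BCay G {s₁, s₂, s₃}).neighborFinset (x, false) =
      {(s₁ * x, true), (s₂ * x, true), (s₃ * x, true)} := by
  ext w
  rw [SimpleGraph.mem_neighborFinset, bcay_adj_iff]
  obtain ⟨w1, w2⟩ := w
  simp only [Finset.mem_insert, Finset.mem_singleton, Prod.mk.injEq]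
  constructor
  · rintro (⟨-, h2, s, hs, hw⟩ | ⟨-, h2, -⟩)
    · subst h2
      rcases hs with rfl | rfl | rfl
      · exact Or.inl ⟨hw, rfl⟩
      · exact Or.inr (Or.inl ⟨hw, rfl⟩)
      · exact Or.inr (Or.inr ⟨hw, rfl⟩)
    · simp at h2
  · rintro (⟨rfl, rfl⟩ | ⟨rfl, rfl⟩ | ⟨rfl, rfl⟩)
    · refine Or.inl ⟨?_, ?_, s₁, ?_, ?_⟩ <;> simp
    · refine Or.inl ⟨?_, ?_, s₂, ?_, ?_⟩ <;> simp
    · refine Or.inl ⟨?_, ?_, s₃, ?_, ?_⟩ <;> simp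

lemma bcay_neighborFinset_true [DecidableRel (BCay G {s₁, s₂, s₃}).Adj] (x : G) :
    (BCay G {s₁, s₂, s₃}).neighborFinset (x, true) =
      {(s₁⁻¹ * x, false), (s₂⁻¹ * x, false), (s₃⁻¹ * x, false)} := by
  ext w
  rw [SimpleGraph.mem_neighborFinset, bcay_adj_iff]
  obtain ⟨w1, w2⟩ := w
  simp only [Finset.mem_insert, Finset.mem_singleton, Prod.mk.injEq]
  constructor
  · rintro (⟨h1, -, -⟩ | ⟨h1, -, s, hs, hw⟩)
    · exact Bool.noConfusion h1
    · subst h1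
      rcases hs with rfl | rfl | rfl
      · exact Or.inl ⟨by rw [hw]; group, rfl⟩
      · exact Or.inr (Or.inl ⟨by rw [hw]; group, rfl⟩)
      · exact Or.inr (Or.inr ⟨by rw [hw]; group, rfl⟩)
  · rintro (⟨rfl, rfl⟩ | ⟨rfl, rfl⟩ | ⟨rfl, rfl⟩)
    · refine Or.inr ⟨?_, ?_, s₁, ?_, ?_⟩ <;> simp
    · refine Or.inr ⟨?_, ?_, s₂, ?_, ?_⟩ <;> simp
    · refine Or.inr ⟨?_, ?_, s₃, ?_, ?_⟩ <;> simp

include h12 h13 h23 in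
lemma bcay_degree [DecidableRel (BCay G {s₁, s₂, s₃}).Adj] (v : G × Bool) :
    (BCay G {s₁, s₂, s₃}).degree v = 3 := by
  obtain ⟨x, b⟩ := v
  rw [← SimpleGraph.card_neighborFinset_eq_degree]
  cases b
  · rw [bcay_neighborFinset_false x]
    rw [Finset.card_insert_of_notMem (by simp [h12, h13]), Finset.card_insert_of_notMem
      (by simp [h23]), Finset.card_singleton]
  · rw [bcay_neighborFinset_true x]
    have h12' : s₁⁻¹ ≠ s₂⁻¹ := fun h => h12 (inv_injective h)
    have h13' : s₁⁻¹ ≠ s₃⁻¹ := fun h => h13 (inv_injective h)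
    have h23' : s₂⁻¹ ≠ s₃⁻¹ := fun h => h23 (inv_injective h)
    rw [Finset.card_insert_of_notMem (by simp [h12', h13']), Finset.card_insert_of_notMem
      (by simp [h23']), Finset.card_singleton]

end Adj

section Quat
open QuaternionGroup

variable (n : ℕ) [NeZero n]

lemma reach_of_adj_invariant {W : Type*} {G : SimpleGraph W} {f : W → ℂ}
    (h : ∀ u v, G.Adj u v → f u = f v) :
    ∀ u v, G.Reachable u v → f u = f v := by
  intro u v huv
  obtain ⟨w⟩ := huv
  induction w with
  | nil => rfl
  | cons h' p ih => exact (h _ _ h').trans ih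

lemma good_connected :
    ∀ u v : QuaternionGroup n × Bool,
      (BCay (QuaternionGroup n) {1, a 1, xa 0}).Reachable u v := by
  haveI : NeZero (2 * n) := ⟨mul_ne_zero two_ne_zero (NeZero.ne n)⟩
  set G := BCay (QuaternionGroup n) ({1, a 1, xa 0} : Set (QuaternionGroup n)) with hG
  have hadj : ∀ s ∈ ({1, a 1, xa 0} : Set (QuaternionGroup n)), ∀ x,
      G.Adj (x, false) (s * x, true) := by
    intro s hs x
    rw [hG, bcay_adj_iff]
    exact Or.inl ⟨rfl, rfl, s, hs, rfl⟩
  have hud : ∀ x : QuaternionGroup n, G.Adj (x, false) (x, true) := by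
    intro x
    have := hadj 1 (by simp) x
    rwa [one_mul] at this
  have hstep : ∀ s ∈ ({1, a 1, xa 0} : Set (QuaternionGroup n)), ∀ x,
      G.Reachable (x, false) (s * x, false) :=
    fun s hs x => ((hadj s hs x).reachable).trans ((hud (s * x)).reachable.symm)
  have haux : ∀ k : ℕ, G.Reachable ((1 : QuaternionGroup n), false)
      (a ((k : ZMod (2 * n))), false) := by
    intro k
    induction k with
    | zero =>
      rw [Nat.cast_zero, ← one_def]
    | succ k ih =>
      have hs := hstep (a 1) (by simp) (a ((k : ZMod (2 * n))))
      rw [a_mul_a] at hs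
      have hc : (((k + 1 : ℕ)) : ZMod (2 * n)) = 1 + (k : ZMod (2 * n)) := by
        push_cast; ring
      rw [hc]
      exact ih.trans hs
  have hA : ∀ i : ZMod (2 * n), G.Reachable ((1 : QuaternionGroup n), false) (a i, false) := by
    intro i
    obtain ⟨k, rfl⟩ := ZMod.natCast_zmod_surjective i
    exact haux k
  have hXA : ∀ i : ZMod (2 * n), G.Reachable ((1 : QuaternionGroup n), false) (xa i, false) := by
    intro i
    have h2 := hstep (xa 0) (by simp) (a i)
    rw [xa_mul_a, zero_add] at h2
    exact (hA i).trans h2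
  have hall : ∀ v : QuaternionGroup n × Bool,
      G.Reachable ((1 : QuaternionGroup n), false) v := by
    rintro ⟨g, b⟩
    have hg : G.Reachable ((1 : QuaternionGroup n), false) (g, false) := by
      cases g with
      | a i => exact hA i
      | xa i => exact hXA i
    cases b
    · exact hg
    · exact hg.trans (hud g).reachable
  intro u v
  exact (hall u).symm.trans (hall v)

/-- index of a quaternion group element -/
def qind : QuaternionGroup n → ZMod (2 * n)
  | a i => i
  | xa i => i

/-- parity sign function -/
noncomputable def qsign (v : QuaternionGroup n × Bool) : ℂ :=
  if (ZMod.castHom (⟨n, rfl⟩ : (2 : ℕ) ∣ 2 * n) (ZMod 2)) (qind n v.1) = 0 then 1 else -1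

lemma qsign_mul (heven : Even n) :
    ∀ s ∈ ({1, a 2, xa 0} : Set (QuaternionGroup n)), ∀ x : QuaternionGroup n,
      qsign n (s * x, false) = qsign n (x, false) := by
  set φ := ZMod.castHom (⟨n, rfl⟩ : (2 : ℕ) ∣ 2 * n) (ZMod 2) with hφ
  have h2 : φ (2 : ZMod (2 * n)) = 0 := by
    have : ((2 : ℕ) : ZMod (2 * n)) = (2 : ZMod (2 * n)) := by push_cast; ring
    rw [← this, map_natCast]
    decide
  have hn0 : φ ((n : ℕ) : ZMod (2 * n)) = 0 := by
    rw [map_natCast, ZMod.natCast_eq_zero_iff]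
    exact heven.two_dvd
  have key : ∀ s ∈ ({1, a 2, xa 0} : Set (QuaternionGroup n)), ∀ x : QuaternionGroup n,
      φ (qind n (s * x)) = φ (qind n x) := by
    rintro s (rfl | rfl | rfl) x
    · rw [one_mul]
    · cases x with
      | a j => rw [a_mul_a]; show φ (2 + j) = φ j; rw [map_add, h2, zero_add]
      | xa j => rw [a_mul_xa]; show φ (j - 2) = φ j; rw [map_sub, h2, sub_zero]
    · cases x with
      | a j => rw [xa_mul_a, zero_add]; rfl
      | xa j =>
        rw [xa_mul_xa]
        show φ ((n : ZMod (2 * n)) + j - 0) = φ j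
        rw [sub_zero, map_add, hn0, zero_add]
  intro s hs x
  unfold qsign
  rw [key s hs x]

lemma qsign_adj_invariant (heven : Even n) :
    ∀ u v : QuaternionGroup n × Bool,
      (BCay (QuaternionGroup n) {1, a 2, xa 0}).Adj u v → qsign n u = qsign n v := by
  intro u v huv
  rw [bcay_adj_iff] at huv
  have hs : ∀ w : QuaternionGroup n × Bool, qsign n w = qsign n (w.1, false) := fun w => rfl
  rcases huv with ⟨-, -, s, hmem, hv⟩ | ⟨-, -, s, hmem, hv⟩
  · rw [hs u, hs v, hv]
    exact (qsign_mul n heven s hmem u.1).symm ▸ (qsign_mul n heven s hmem u.1).symm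
  · rw [hs u, hs v, hv]
    exact qsign_mul n heven s hmem v.1

end Quat

lemma adj_herm {V : Type*} [Fintype V] [DecidableEq V] (G : SimpleGraph V)
    [DecidableRel G.Adj] : (G.adjMatrix ℂ).IsHermitian := by
  ext i j
  simp [Matrix.conjTranspose_apply, SimpleGraph.adjMatrix_apply, SimpleGraph.adj_comm]

lemma mem_ker_iff {m : Type*} [Fintype m] [DecidableEq m] (M : Matrix m m ℂ) (c : ℂ)
    (x : m → ℂ) : x ∈ LinearMap.ker (M - c • 1).mulVecLin ↔ M *ᵥ x = c • x := by
  rw [LinearMap.mem_ker, Matrix.mulVecLin_apply, Matrix.sub_mulVec,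
    Matrix.smul_mulVec, Matrix.one_mulVec, sub_eq_zero]

lemma qind_a (n : ℕ) (i : ZMod (2 * n)) : qind n (QuaternionGroup.a i) = i := rfl
lemma qind_xa (n : ℕ) (i : ZMod (2 * n)) : qind n (QuaternionGroup.xa i) = i := rfl


theorem stmt_11 (n : ℕ) [NeZero n] (hn : 2 ≤ n) (heven : Even n) :
    2 ≤ (bcayAdjMatrix n {1, QuaternionGroup.a 2, QuaternionGroup.xa 0}).charpoly.rootMultiplicity 3 ∧
    (bcayAdjMatrix n {1, QuaternionGroup.a 1, QuaternionGroup.xa 0}).charpoly.rootMultiplicity 3 = 1 := by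
  haveI : NeZero (2 * n) := ⟨mul_ne_zero two_ne_zero (NeZero.ne n)⟩
  have h4le : 4 ≤ 2 * n := by omega
  have h2ne : ((2 : ZMod (2 * n))) ≠ 0 := by
    have : (((2 : ℕ)) : ZMod (2 * n)) = (2 : ZMod (2 * n)) := by push_cast; ring
    rw [← this, Ne, ZMod.natCast_eq_zero_iff]
    intro hdvd
    have := Nat.le_of_dvd (by norm_num) hdvd
    omega
  have h1ne : ((1 : ZMod (2 * n))) ≠ 0 := by
    have : (((1 : ℕ)) : ZMod (2 * n)) = (1 : ZMod (2 * n)) := by push_cast; ring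
    rw [← this, Ne, ZMod.natCast_eq_zero_iff]
    intro hdvd
    have := Nat.le_of_dvd (by norm_num) hdvd
    omega
  have h3 : ((3 : ℝ) : ℂ) = 3 := by norm_num
  have hxa1 : (1 : QuaternionGroup n) ≠ QuaternionGroup.xa 0 := by
    rw [QuaternionGroup.one_def]
    exact fun h => by cases h
  constructor
  · -- bad set {1, a 2, xa 0}
    set S : Set (QuaternionGroup n) :=
      {1, QuaternionGroup.a 2, QuaternionGroup.xa 0} with hS
    letI instDec : DecidableRel (BCay (QuaternionGroup n) S).Adj := Classical.decRel _
    have hAdef : bcayAdjMatrix n S = (BCay (QuaternionGroup n) S).adjMatrix ℂ := rfl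
    have h1a2 : (1 : QuaternionGroup n) ≠ QuaternionGroup.a 2 := by
      rw [QuaternionGroup.one_def]
      simp only [ne_eq, QuaternionGroup.a.injEq]
      exact fun h => h2ne h.symm
    have ha2xa : QuaternionGroup.a (2 : ZMod (2*n)) ≠ QuaternionGroup.xa 0 :=
      fun h => by cases h
    have hdeg : ∀ v, (BCay (QuaternionGroup n) S).degree v = 3 :=
      bcay_degree h1a2 hxa1 ha2xa
    have hmult := herm_rootMultiplicity _ (adj_herm (BCay (QuaternionGroup n) S)) 3
    rw [h3] at hmult
    rw [hAdef, hmult]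
    set K := LinearMap.ker ((BCay (QuaternionGroup n) S).adjMatrix ℂ
      - (3 : ℂ) • 1).mulVecLin with hK
    have hones : (fun _ => (1 : ℂ)) ∈ K := by
      rw [hK, mem_ker_iff, ker_eigen_iff _ hdeg]
      intro u v _
      rfl
    have hq : qsign n ∈ K := by
      rw [hK, mem_ker_iff, ker_eigen_iff _ hdeg]
      exact reach_of_adj_invariant (qsign_adj_invariant n heven)
    have hli : LinearIndependent ℂ ![(⟨_, hones⟩ : K), ⟨_, hq⟩] := by
      rw [LinearIndependent.pair_iff]
      intro s t hst
      have h0 : s • (fun _ => (1:ℂ)) + t • qsign n = 0 := by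
        exact congrArg Subtype.val hst
      have hv0 := congrFun h0 ((1 : QuaternionGroup n), false)
      have hv1 := congrFun h0 ((QuaternionGroup.a 1 : QuaternionGroup n), false)
      have hq0 : qsign n ((1 : QuaternionGroup n), false) = 1 := by
        rw [qsign, QuaternionGroup.one_def, qind_a]
        simp
      have hq1 : qsign n ((QuaternionGroup.a 1 : QuaternionGroup n), false) = -1 := by
        rw [qsign, qind_a]
        rw [if_neg]
        rw [_root_.map_one]
        decide
      simp only [Pi.add_apply, Pi.smul_apply, smul_eq_mul, Pi.zero_apply, hq0, hq1,
        mul_one, mul_neg] at hv0 hv1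
      constructor
      · linear_combination (hv0 + hv1) / 2
      · linear_combination (hv0 - hv1) / 2
    have hcard := hli.fintype_card_le_finrank
    simpa using hcard
  · -- good set {1, a 1, xa 0}
    set S : Set (QuaternionGroup n) :=
      {1, QuaternionGroup.a 1, QuaternionGroup.xa 0} with hS
    letI instDec : DecidableRel (BCay (QuaternionGroup n) S).Adj := Classical.decRel _
    have hAdef : bcayAdjMatrix n S = (BCay (QuaternionGroup n) S).adjMatrix ℂ := rfl
    have h1a1 : (1 : QuaternionGroup n) ≠ QuaternionGroup.a 1 := by
      rw [QuaternionGroup.one_def]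
      simp only [ne_eq, QuaternionGroup.a.injEq]
      exact fun h => h1ne h.symm
    have ha1xa : QuaternionGroup.a (1 : ZMod (2*n)) ≠ QuaternionGroup.xa 0 :=
      fun h => by cases h
    have hdeg : ∀ v, (BCay (QuaternionGroup n) S).degree v = 3 :=
      bcay_degree h1a1 hxa1 ha1xa
    have hmult := herm_rootMultiplicity _ (adj_herm (BCay (QuaternionGroup n) S)) 3
    rw [h3] at hmult
    rw [hAdef, hmult]
    set K := LinearMap.ker ((BCay (QuaternionGroup n) S).adjMatrix ℂ
      - (3 : ℂ) • 1).mulVecLin with hK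
    have hones : (fun _ => (1 : ℂ)) ∈ K := by
      rw [hK, mem_ker_iff, ker_eigen_iff _ hdeg]
      intro u v _
      rfl
    have hcon := good_connected n
    have hker : K = Submodule.span ℂ {(fun _ => (1 : ℂ) :
        QuaternionGroup n × Bool → ℂ)} := by
      apply le_antisymm
      · intro x hx
        rw [hK, mem_ker_iff, ker_eigen_iff _ hdeg] at hx
        rw [Submodule.mem_span_singleton]
        refine ⟨x ((1 : QuaternionGroup n), false), funext fun v => ?_⟩
        simp only [Pi.smul_apply, smul_eq_mul, mul_one]
        exact (hx ((1 : QuaternionGroup n), false) v (hcon _ _)).symm ▸ rfl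
      · rw [Submodule.span_le, Set.singleton_subset_iff]
        exact hones
    rw [hker, finrank_span_singleton]
    intro h
    exact one_ne_zero (congrFun h ((1 : QuaternionGroup n), false))
end

section
/- Let n ≥ 3 be odd. Then Q_{4n} is a 2-BCI-group: for all subsets S, T ⊆ Q_{4n} with |S| = |T| = 2, if BCay(Q_{4n},S) ≅ BCay(Q_{4n},T) then T = g·α(S) for some g ∈ Q_{4n} and some automorphism α of Q_{4n}. -/
section Graph
variable {G : Type*} [Group G]

lemma bcay_adj (S : Set G) (u v : G × Bool) :
    (BCay G S).Adj u v ↔ u ≠ v ∧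
      ((u.2 = false ∧ v.2 = true ∧ ∃ s ∈ S, v.1 = s * u.1) ∨
       (v.2 = false ∧ u.2 = true ∧ ∃ s ∈ S, u.1 = s * v.1)) :=
  SimpleGraph.fromRel_adj _ _ _

lemma bcay_adj_mul (s t : G) {w : G} (hw : w ∈ ({s, t} : Set G)) (y : G) :
    (BCay G {s, t}).Adj (y, false) (w * y, true) := by
  rw [bcay_adj]
  exact ⟨by simp, Or.inl ⟨rfl, rfl, w, hw, rfl⟩⟩

/-- The candidate connected component of `(x, false)` in `BCay G {s,t}`. -/
def bcomp (s t : G) (x : G) : Set (G × Bool) :=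
  ((fun z => (z * x, false)) '' (Subgroup.zpowers (t⁻¹ * s) : Set G)) ∪
    ((fun z => (s * z * x, true)) '' (Subgroup.zpowers (t⁻¹ * s) : Set G))

lemma mem_bcomp_false (s t x y : G) :
    (y, false) ∈ bcomp s t x ↔ ∃ k : ℤ, y = (t⁻¹ * s) ^ k * x := by
  constructor
  · rintro (⟨z, hz, h⟩ | ⟨z, hz, h⟩)
    · obtain ⟨k, rfl⟩ := Subgroup.mem_zpowers_iff.1 hz
      exact ⟨k, (congrArg Prod.fst h).symm⟩
    · exact absurd (congrArg Prod.snd h) (by simp)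
  · rintro ⟨k, rfl⟩
    exact Or.inl ⟨_, Subgroup.mem_zpowers_iff.2 ⟨k, rfl⟩, rfl⟩

lemma mem_bcomp_true (s t x y : G) :
    (y, true) ∈ bcomp s t x ↔ ∃ k : ℤ, y = s * (t⁻¹ * s) ^ k * x := by
  constructor
  · rintro (⟨z, hz, h⟩ | ⟨z, hz, h⟩)
    · exact absurd (congrArg Prod.snd h) (by simp)
    · obtain ⟨k, rfl⟩ := Subgroup.mem_zpowers_iff.1 hz
      exact ⟨k, (congrArg Prod.fst h).symm⟩
  · rintro ⟨k, rfl⟩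
    exact Or.inr ⟨_, Subgroup.mem_zpowers_iff.2 ⟨k, rfl⟩, rfl⟩

lemma key_shift (s t : G) (k : ℤ) : t * (t⁻¹ * s) ^ (k + 1) = s * (t⁻¹ * s) ^ k := by
  have h : (t⁻¹ * s) ^ (k + 1) = (t⁻¹ * s) * (t⁻¹ * s) ^ k := by
    rw [add_comm, zpow_add, zpow_one]
  rw [h, ← mul_assoc, ← mul_assoc, mul_inv_cancel, one_mul]

lemma bcomp_closed (s t x : G) {u v : G × Bool} (hu : u ∈ bcomp s t x)
    (hadj : (BCay G {s, t}).Adj u v) : v ∈ bcomp s t x := by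
  rw [bcay_adj] at hadj
  obtain ⟨y, bu⟩ := u; obtain ⟨z, bv⟩ := v
  obtain ⟨-, ⟨hb, hb', w, hw, hz⟩ | ⟨hb', hb, w, hw, hy⟩⟩ := hadj
  · simp only at hb hb' hz
    subst hb; subst hb'; subst hz
    rw [mem_bcomp_false] at hu; obtain ⟨k, rfl⟩ := hu
    rw [mem_bcomp_true]
    simp only [Set.mem_insert_iff, Set.mem_singleton_iff] at hw
    rcases hw with rfl | rfl
    · exact ⟨k, by group⟩
    · refine ⟨k - 1, ?_⟩
      have h5 := key_shift s w (k - 1)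
      rw [show (k : ℤ) - 1 + 1 = k by ring] at h5
      rw [← mul_assoc, h5, mul_assoc]
  · simp only at hb hb' hy
    subst hb; subst hb'
    rw [mem_bcomp_true] at hu; obtain ⟨k, hk⟩ := hu
    rw [mem_bcomp_false]
    have hzval : z = w⁻¹ * (s * (t⁻¹ * s) ^ k * x) := by
      rw [← hk]; rw [hy]; group
    simp only [Set.mem_insert_iff, Set.mem_singleton_iff] at hw
    rcases hw with rfl | rfl
    · exact ⟨k, by rw [hzval]; group⟩
    · exact ⟨k + 1, by rw [hzval]; group⟩

lemma bcomp_reachable (s t x : G) {u : G × Bool} (hu : u ∈ bcomp s t x) :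
    (BCay G {s, t}).Reachable (x, false) u := by
  have hfalse : ∀ k : ℤ, (BCay G {s, t}).Reachable (x, false) ((t⁻¹ * s) ^ k * x, false) := by
    intro k
    induction k using Int.induction_on with
    | zero => simpa using SimpleGraph.Reachable.refl _
    | succ k ih =>
        refine ih.trans ?_
        have h1 : (BCay G {s, t}).Adj ((t⁻¹ * s) ^ (k : ℤ) * x, false)
            (s * ((t⁻¹ * s) ^ (k : ℤ) * x), true) :=
          bcay_adj_mul s t (by simp) _
        have h2 : (BCay G {s, t}).Adj ((t⁻¹ * s) ^ ((k : ℤ) + 1) * x, false)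
            (t * ((t⁻¹ * s) ^ ((k : ℤ) + 1) * x), true) :=
          bcay_adj_mul s t (by simp) _
        have he : t * ((t⁻¹ * s) ^ ((k : ℤ) + 1) * x) = s * ((t⁻¹ * s) ^ (k : ℤ) * x) := by
          rw [← mul_assoc, key_shift, mul_assoc]
        rw [he] at h2
        exact h1.reachable.trans h2.reachable.symm
    | pred k ih =>
        refine ih.trans ?_
        have h1 : (BCay G {s, t}).Adj ((t⁻¹ * s) ^ (-(k : ℤ) - 1) * x, false)
            (s * ((t⁻¹ * s) ^ (-(k : ℤ) - 1) * x), true) :=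
          bcay_adj_mul s t (by simp) _
        have h2 : (BCay G {s, t}).Adj ((t⁻¹ * s) ^ (-(k : ℤ)) * x, false)
            (t * ((t⁻¹ * s) ^ (-(k : ℤ)) * x), true) :=
          bcay_adj_mul s t (by simp) _
        have he : t * ((t⁻¹ * s) ^ (-(k : ℤ)) * x) = s * ((t⁻¹ * s) ^ (-(k : ℤ) - 1) * x) := by
          rw [show (-(k : ℤ)) = (-(k : ℤ) - 1) + 1 by ring, ← mul_assoc, key_shift, mul_assoc]
          ring_nf
        rw [he] at h2
        exact h2.reachable.trans h1.reachable.symm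
  obtain ⟨y, b⟩ := u
  cases b
  · rw [mem_bcomp_false] at hu; obtain ⟨k, rfl⟩ := hu
    exact hfalse k
  · rw [mem_bcomp_true] at hu; obtain ⟨k, rfl⟩ := hu
    have h1 : (BCay G {s, t}).Adj ((t⁻¹ * s) ^ k * x, false)
        (s * ((t⁻¹ * s) ^ k * x), true) := bcay_adj_mul s t (by simp) _
    rw [show s * (t⁻¹ * s) ^ k * x = s * ((t⁻¹ * s) ^ k * x) by group]
    exact (hfalse k).trans h1.reachable

lemma bcomp_walk (s t x : G) : ∀ {u v : G × Bool}, (BCay G {s, t}).Walk u v →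
    u ∈ bcomp s t x → v ∈ bcomp s t x := by
  intro u v p
  induction p with
  | nil => exact id
  | cons hadj p ih => exact fun hu => ih (bcomp_closed s t x hu hadj)

lemma reach_eq_bcomp (s t x : G) :
    {u | (BCay G {s, t}).Reachable (x, false) u} = bcomp s t x := by
  apply Set.eq_of_subset_of_subset
  · rintro u hu
    obtain ⟨p⟩ := hu
    have hx : ((x : G), false) ∈ bcomp s t x := by
      rw [mem_bcomp_false]; exact ⟨0, by simp⟩
    exact bcomp_walk s t x p hx
  · intro u hu
    exact bcomp_reachable s t x hu

lemma bcomp_ncard [Finite G] (s t x : G) :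
    (bcomp s t x).ncard = 2 * orderOf (t⁻¹ * s) := by
  have hinj1 : Function.Injective (fun z : G => (z * x, false)) := by
    intro a b h
    exact mul_right_cancel (congrArg Prod.fst h)
  have hinj2 : Function.Injective (fun z : G => (s * z * x, true)) := by
    intro a b h
    exact mul_left_cancel (mul_right_cancel (congrArg Prod.fst h))
  have hdisj : Disjoint ((fun z : G => (z * x, false)) '' (Subgroup.zpowers (t⁻¹ * s) : Set G))
      ((fun z : G => (s * z * x, true)) '' (Subgroup.zpowers (t⁻¹ * s) : Set G)) := by
    rw [Set.disjoint_left]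
    rintro u ⟨z, -, rfl⟩ ⟨z', -, h⟩
    exact absurd (congrArg Prod.snd h) (by simp)
  have hz : (Subgroup.zpowers (t⁻¹ * s) : Set G).ncard = orderOf (t⁻¹ * s) := by
    rw [← Nat.card_coe_set_eq]
    exact Nat.card_zpowers _
  rw [bcomp, Set.ncard_union_eq hdisj (Set.toFinite _) (Set.toFinite _),
    Set.ncard_image_of_injective _ hinj1, Set.ncard_image_of_injective _ hinj2, hz]
  ring

lemma reach_ncard [Finite G] (s t : G) (v : G × Bool) :
    {u | (BCay G {s, t}).Reachable v u}.ncard = 2 * orderOf (t⁻¹ * s) := by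
  obtain ⟨x, b⟩ := v
  cases b
  · rw [reach_eq_bcomp, bcomp_ncard]
  · have hadj : (BCay G {s, t}).Adj (s⁻¹ * x, false) (x, true) := by
      have h := bcay_adj_mul s t (show s ∈ ({s, t} : Set G) by simp) (s⁻¹ * x)
      rwa [mul_inv_cancel_left] at h
    have hset : {u | (BCay G {s, t}).Reachable (x, true) u}
        = {u | (BCay G {s, t}).Reachable (s⁻¹ * x, false) u} := by
      ext u
      exact ⟨fun h => hadj.reachable.trans h, fun h => hadj.reachable.symm.trans h⟩
    rw [hset, reach_eq_bcomp, bcomp_ncard]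

lemma iso_reach_ncard {V W : Type*} {G1 : SimpleGraph V} {G2 : SimpleGraph W}
    (f : G1 ≃g G2) (v : V) :
    {u | G2.Reachable (f v) u}.ncard = {u | G1.Reachable v u}.ncard := by
  have hset : {u | G2.Reachable (f v) u} = f '' {u | G1.Reachable v u} := by
    ext u
    simp only [Set.mem_image, Set.mem_setOf_eq]
    constructor
    · intro h
      refine ⟨f.symm u, ?_, by simp⟩
      rw [← SimpleGraph.Iso.reachable_iff (φ := f)]
      simpa using h
    · rintro ⟨w, hw, rfl⟩
      exact (SimpleGraph.Iso.reachable_iff).2 hw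
  rw [hset]; exact Set.ncard_image_of_injective _ (RelIso.injective f)
end Graph

lemma zmod_addOrderOf_eq (M : ℕ) [NeZero M] (i : ZMod M) :
    addOrderOf i = M / Nat.gcd M i.val := by
  conv_lhs => rw [← ZMod.natCast_rightInverse (n := M) i]
  exact ZMod.addOrderOf_coe _ (NeZero.ne M)

/-- Every element of `ZMod M` is a unit multiple of (the cast of) `gcd M i.val`. -/
lemma zmod_eq_unit_mul_gcd (M : ℕ) [NeZero M] (i : ZMod M) :
    ∃ u : (ZMod M)ˣ, i = (u : ZMod M) * (Nat.gcd M i.val : ZMod M) := by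
  set g := Nat.gcd M i.val with hg
  have hgM : g ∣ M := Nat.gcd_dvd_left _ _
  have hgi : g ∣ i.val := Nat.gcd_dvd_right _ _
  have hMpos : 0 < M := Nat.pos_of_ne_zero (NeZero.ne M)
  have hgpos : 0 < g := Nat.gcd_pos_of_pos_left _ hMpos
  have hdvd : M / g ∣ M := Nat.div_dvd_of_dvd hgM
  have hcop : Nat.Coprime (i.val / g) (M / g) :=
    (Nat.coprime_div_gcd_div_gcd (m := M) (n := i.val) hgpos).symm
  have hq : NeZero (M / g) := ⟨(Nat.div_pos (Nat.le_of_dvd hMpos hgM) hgpos).ne'⟩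
  obtain ⟨u, hu⟩ := ZMod.unitsMap_surjective hdvd (ZMod.unitOfCoprime _ hcop)
  refine ⟨u, ?_⟩
  have hcongr : ((u : ZMod M).val : ZMod (M / g)) = ((i.val / g : ℕ) : ZMod (M / g)) := by
    have h2 := congrArg (fun w : (ZMod (M/g))ˣ => (w : ZMod (M/g))) hu
    simpa [ZMod.unitsMap_def, ZMod.unitOfCoprime, ZMod.natCast_val, ZMod.castHom_apply] using h2
  have hmod : (u : ZMod M).val ≡ i.val / g [MOD M / g] := (ZMod.natCast_eq_natCast_iff _ _ _).1 hcongr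
  have hmod2 : (u : ZMod M).val * g ≡ (i.val / g) * g [MOD (M / g) * g] := by
    exact Nat.ModEq.mul_right' (c := g) hmod
  rw [Nat.div_mul_cancel hgM, Nat.div_mul_cancel hgi] at hmod2
  have h3 : (((u : ZMod M).val * g : ℕ) : ZMod M) = ((i.val : ℕ) : ZMod M) :=
    (ZMod.natCast_eq_natCast_iff _ _ _).2 hmod2
  rw [ZMod.natCast_val, ZMod.cast_id] at h3
  rw [← h3]
  push_cast [ZMod.natCast_val, ZMod.cast_id]
  ring

lemma zmod_unit_of_addOrderOf_eq {M : ℕ} [NeZero M] {i j : ZMod M}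
    (h : addOrderOf i = addOrderOf j) : ∃ u : (ZMod M)ˣ, j = (u : ZMod M) * i := by
  have hM : M ≠ 0 := NeZero.ne M
  have hgcd : Nat.gcd M i.val = Nat.gcd M j.val := by
    rw [zmod_addOrderOf_eq, zmod_addOrderOf_eq] at h
    have h1 : Nat.gcd M i.val ∣ M := Nat.gcd_dvd_left _ _
    have h2 : Nat.gcd M j.val ∣ M := Nat.gcd_dvd_left _ _
    rw [← Nat.div_div_self h1 hM, ← Nat.div_div_self h2 hM, h]
  obtain ⟨u, hu⟩ := zmod_eq_unit_mul_gcd M i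
  obtain ⟨v, hv⟩ := zmod_eq_unit_mul_gcd M j
  refine ⟨v * u⁻¹, ?_⟩
  have : ((u⁻¹ : (ZMod M)ˣ) : ZMod M) * i = (Nat.gcd M i.val : ZMod M) := by
    have h4 := congrArg (fun z => ((u⁻¹ : (ZMod M)ˣ) : ZMod M) * z) hu
    simpa [← mul_assoc] using h4
  push_cast
  rw [mul_assoc, this, hgcd, ← hv]

open QuaternionGroup

section Quat
variable {n : ℕ}

lemma unit_mul_n {n : ℕ} (hodd : Odd n) (u : (ZMod (2*n))ˣ) :
    (u : ZMod (2*n)) * (n : ZMod (2*n)) = (n : ZMod (2*n)) := by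
  rcases Nat.eq_zero_or_pos n with h0 | hpos
  · subst h0; simp
  have : NeZero (2*n) := ⟨by omega⟩
  set c := (u : ZMod (2*n)).val with hc
  have hcop : Nat.Coprime c (2*n) := ZMod.val_coe_unit_coprime u
  have hcodd : Odd c := by
    have h2 : (2:ℕ) ∣ 2*n := ⟨n, rfl⟩
    have := Nat.Coprime.coprime_dvd_right h2 hcop
    exact Nat.coprime_two_right.mp this
  obtain ⟨k, hk⟩ := hcodd
  have hcast : ((c : ℕ) : ZMod (2*n)) = (u : ZMod (2*n)) := by
    rw [hc, ZMod.natCast_val, ZMod.cast_id]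
  rw [← hcast, hk]
  push_cast
  have h2n : ((2*n : ℕ) : ZMod (2*n)) = 0 := ZMod.natCast_self _
  push_cast at h2n
  calc (2*(k:ZMod (2*n)) + 1) * n = k * (2*n) + n := by ring
  _ = (n : ZMod (2*n)) := by rw [h2n]; ring

/-- The automorphism of the quaternion group sending `a i ↦ a (u*i)`, `xa i ↦ xa (u*i + s)`. -/
def quatAut (n : ℕ) (u : (ZMod (2*n))ˣ) (s : ZMod (2*n))
    (hu : (u : ZMod (2*n)) * (n : ZMod (2*n)) = (n : ZMod (2*n))) :
    QuaternionGroup n ≃* QuaternionGroup n where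
  toFun x := match x with
    | .a i => .a ((u : ZMod (2*n)) * i)
    | .xa i => .xa ((u : ZMod (2*n)) * i + s)
  invFun x := match x with
    | .a i => .a (((u⁻¹ : (ZMod (2*n))ˣ) : ZMod (2*n)) * i)
    | .xa i => .xa (((u⁻¹ : (ZMod (2*n))ˣ) : ZMod (2*n)) * (i - s))
  left_inv := by
    rintro (i | i) <;> simp [← mul_assoc, Units.inv_mul]
  right_inv := by
    rintro (i | i) <;> simp [← mul_assoc, Units.mul_inv]
  map_mul' := by
    rintro (i | i) (j | j) <;>
      simp only [a_mul_a, a_mul_xa, xa_mul_a, xa_mul_xa] <;> congr 1 <;> ring_nf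
    rw [hu]; ring

lemma quat_exists_aut (hn : 3 ≤ n) (hodd : Odd n) (x y : QuaternionGroup n)
    (h : orderOf x = orderOf y) :
    ∃ α : QuaternionGroup n ≃* QuaternionGroup n, α x = y := by
  have hnz : NeZero n := ⟨by omega⟩
  have h2nz : NeZero (2*n) := ⟨by omega⟩
  have hndvd : ¬ (4 ∣ 2*n) := by
    rcases hodd with ⟨k, hk⟩; omega
  have horda : ∀ i : ZMod (2*n), orderOf (QuaternionGroup.a (n := n) i) ≠ 4 := by
    intro i hcon
    apply hndvd
    rw [← hcon, orderOf_a]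
    exact Nat.div_dvd_of_dvd (Nat.gcd_dvd_left _ _)
  rcases x with i | i <;> rcases y with j | j
  · -- a i, a j
    have hord : addOrderOf i = addOrderOf j := by
      rw [orderOf_a, orderOf_a] at h
      rw [zmod_addOrderOf_eq, zmod_addOrderOf_eq]
      exact h
    obtain ⟨u, hu⟩ := zmod_unit_of_addOrderOf_eq hord
    exact ⟨quatAut n u 0 (unit_mul_n hodd u), by simp [quatAut, ← hu]⟩
  · exact absurd ((orderOf_xa j) ▸ h) (horda i)
  · exact absurd ((orderOf_xa i) ▸ h).symm (horda j)
  · refine ⟨quatAut n 1 (j - i) (unit_mul_n hodd 1), ?_⟩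
    simp [quatAut]
end Quat



theorem stmt_16 (n : ℕ) (hn : 3 ≤ n) (hodd : Odd n)
    (S T : Set (QuaternionGroup n)) (hS : S.ncard = 2) (hT : T.ncard = 2)
    (hiso : Nonempty (BCay (QuaternionGroup n) S ≃g BCay (QuaternionGroup n) T)) :
    ∃ (g : QuaternionGroup n) (α : QuaternionGroup n ≃* QuaternionGroup n),
      T = (fun s => g * α s) '' S := by
  have hnz : NeZero n := ⟨by omega⟩
  obtain ⟨f⟩ := hiso
  obtain ⟨s1, s2, hs12, rfl⟩ := Set.ncard_eq_two.1 hS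
  obtain ⟨t1, t2, ht12, rfl⟩ := Set.ncard_eq_two.1 hT
  have h1 := reach_ncard s1 s2 ((1 : QuaternionGroup n), false)
  have h2 := reach_ncard t1 t2 (f ((1 : QuaternionGroup n), false))
  have h3 := iso_reach_ncard f ((1 : QuaternionGroup n), false)
  rw [h1, h2] at h3
  have hord : orderOf (s2⁻¹ * s1) = orderOf (t2⁻¹ * t1) := by omega
  obtain ⟨α, hα⟩ := quat_exists_aut hn hodd _ _ hord
  refine ⟨t1 * (α s1)⁻¹, α, ?_⟩
  have h4 : (α s2)⁻¹ * α s1 = t2⁻¹ * t1 := by rw [← map_inv, ← map_mul]; exact hα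
  have e1 : t1 * (α s1)⁻¹ * α s1 = t1 := by group
  have e2 : t1 * (α s1)⁻¹ * α s2 = t2 := by
    have h5 : α s1 = α s2 * (t2⁻¹ * t1) := by rw [← h4]; group
    rw [h5]; group
  simp only [Set.image_pair]
  rw [e1, e2]
end

section
/- Let n ≥ 3 be even. Then Q_{4n} is not a 2-BCI-group: there exist subsets S, T ⊆ Q_{4n} of size 2 with BCay(Q_{4n},S) ≅ BCay(Q_{4n},T) but T ≠ g·α(S) for every g ∈ Q_{4n} and every automorphism α of Q_{4n}. -/
section Intertwine

variable {G : Type*} [Group G] [Finite G]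

/-- The decomposition map `(G ⧸ ⟨w⟩) × ZMod d → G`. -/
noncomputable def psiMap (w : G) (d : ℕ) : (G ⧸ Subgroup.zpowers w) × ZMod d → G :=
  fun p => p.1.out * w ^ (p.2.val)

omit [Finite G] in
lemma psiMap_mk (w : G) (d : ℕ) (q : G ⧸ Subgroup.zpowers w) (k : ZMod d) :
    (QuotientGroup.mk (psiMap w d (q, k)) : G ⧸ Subgroup.zpowers w) = q := by
  unfold psiMap
  rw [QuotientGroup.mk_mul_of_mem _ (Subgroup.pow_mem _ (Subgroup.mem_zpowers w) _)]
  exact QuotientGroup.out_eq' q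

lemma psiMap_natCast (w : G) (d : ℕ) (hd : orderOf w = d)
    (q : G ⧸ Subgroup.zpowers w) (m : ℕ) :
    psiMap w d (q, (m : ZMod d)) = q.out * w ^ m := by
  haveI : NeZero d := ⟨hd ▸ (orderOf_pos w).ne'⟩
  unfold psiMap
  simp only
  rw [ZMod.val_natCast, ← hd, pow_mod_orderOf]

lemma psiMap_shift (w : G) (d : ℕ) (hd : orderOf w = d)
    (q : G ⧸ Subgroup.zpowers w) (k : ZMod d) :
    psiMap w d (q, k + 1) = psiMap w d (q, k) * w := by
  haveI : NeZero d := ⟨hd ▸ (orderOf_pos w).ne'⟩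
  have h1 : ((k.val : ZMod d)) = k := ZMod.natCast_rightInverse k
  calc psiMap w d (q, k + 1) = psiMap w d (q, ((k.val + 1 : ℕ) : ZMod d)) := by
        rw [Nat.cast_add, Nat.cast_one, h1]
    _ = q.out * w ^ (k.val + 1) := psiMap_natCast w d hd q _
    _ = (q.out * w ^ k.val) * w := by rw [pow_succ, mul_assoc]
    _ = psiMap w d (q, k) * w := rfl

lemma psiMap_bijective (w : G) (d : ℕ) (hd : orderOf w = d) :
    Function.Bijective (psiMap w d) := by
  subst hd
  haveI : NeZero (orderOf w) := ⟨(orderOf_pos w).ne'⟩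
  constructor
  · rintro ⟨q, j⟩ ⟨q', k⟩ h
    have hq : q = q' := by rw [← psiMap_mk w _ q j, ← psiMap_mk w _ q' k, h]
    subst hq
    have h3 : w ^ j.val = w ^ k.val := mul_left_cancel h
    have : j.val = k.val :=
      pow_injOn_Iio_orderOf (Set.mem_Iio.2 (ZMod.val_lt j)) (Set.mem_Iio.2 (ZMod.val_lt k)) h3
    exact Prod.ext rfl (ZMod.val_injective _ this)
  · intro x
    set q : G ⧸ Subgroup.zpowers w := QuotientGroup.mk x with hq
    have hmem : q.out⁻¹ * x ∈ Subgroup.zpowers w := by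
      rw [← QuotientGroup.eq]
      exact (QuotientGroup.out_eq' q).trans hq
    rw [← _root_.mem_powers_iff_mem_zpowers] at hmem
    obtain ⟨k, hk⟩ := hmem
    refine ⟨(q, (k : ZMod (orderOf w))), ?_⟩
    rw [psiMap_natCast w _ rfl q k]
    have : w ^ k = (Quotient.out q)⁻¹ * x := hk
    rw [this]
    group

/-- A bijection intertwining right multiplication by `u` with right multiplication by `v`. -/
lemma exists_right_intertwiner (u v : G) (h : orderOf u = orderOf v) :
    ∃ F : G ≃ G, ∀ x, F (x * u) = F x * v := by
  set d := orderOf u with hdu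
  have hdv : orderOf v = d := h.symm
  obtain ⟨σ⟩ : Nonempty ((G ⧸ Subgroup.zpowers u) ≃ (G ⧸ Subgroup.zpowers v)) := by
    rw [← Finite.card_eq]
    have hu := Subgroup.card_eq_card_quotient_mul_card_subgroup (Subgroup.zpowers u)
    have hv := Subgroup.card_eq_card_quotient_mul_card_subgroup (Subgroup.zpowers v)
    rw [Nat.card_zpowers] at hu hv
    have hcc : Nat.card (G ⧸ Subgroup.zpowers u) * d = Nat.card (G ⧸ Subgroup.zpowers v) * d := by
      rw [← hdu, ← hdv] at *
      omega
    exact Nat.eq_of_mul_eq_mul_right (hdu ▸ orderOf_pos u) hcc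
  let eu : (G ⧸ Subgroup.zpowers u) × ZMod d ≃ G :=
    Equiv.ofBijective _ (psiMap_bijective u d rfl)
  let ev : (G ⧸ Subgroup.zpowers v) × ZMod d ≃ G :=
    Equiv.ofBijective _ (psiMap_bijective v d hdv)
  refine ⟨eu.symm.trans ((Equiv.prodCongr σ (Equiv.refl _)).trans ev), fun x => ?_⟩
  obtain ⟨⟨q, k⟩, rfl⟩ := eu.surjective x
  have h1 : (eu (q, k)) * u = eu (q, k + 1) := (psiMap_shift u d rfl q k).symm
  have h2 : ∀ q' k', ev (q', k' + 1) = ev (q', k') * v := fun q' k' => psiMap_shift v d hdv q' k'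
  simp only [h1, Equiv.trans_apply, Equiv.symm_apply_apply, Equiv.prodCongr_apply,
    Equiv.coe_refl, Prod.map_apply, id_eq]
  exact h2 (σ q) k

/-- A bijection intertwining left multiplication by `u` with left multiplication by `v`. -/
lemma exists_left_intertwiner (u v : G) (h : orderOf u = orderOf v) :
    ∃ f : G ≃ G, ∀ x, f (u * x) = v * f x := by
  obtain ⟨F, hF⟩ := exists_right_intertwiner u⁻¹ v⁻¹ (by rw [orderOf_inv, orderOf_inv, h])
  refine ⟨(Equiv.inv G).trans (F.trans (Equiv.inv G)), fun x => ?_⟩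
  simp only [Equiv.trans_apply, Equiv.inv_apply]
  rw [mul_inv_rev, hF, mul_inv_rev, inv_inv]

end Intertwine

section BCayIso

variable {G : Type*} [Group G]

/-- An intertwining bijection induces an isomorphism of bi-Cayley graphs. -/
def bcayIsoOfIntertwiner (u v : G) (f : G ≃ G) (hf : ∀ x, f (u * x) = v * f x) :
    BCay G {1, u} ≃g BCay G {1, v} where
  toEquiv := Equiv.prodCongr f (Equiv.refl Bool)
  map_rel_iff' := by
    rintro ⟨x, bx⟩ ⟨y, byy⟩
    have key : ∀ z w : G, ((∃ s ∈ ({1, v} : Set G), f w = s * f z) ↔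
        (∃ s ∈ ({1, u} : Set G), w = s * z)) := by
      intro z w
      simp only [Set.mem_insert_iff, Set.mem_singleton_iff, exists_eq_or_imp, exists_eq_left,
        one_mul]
      rw [← hf z, f.apply_eq_iff_eq, f.apply_eq_iff_eq]
    simp only [BCay, SimpleGraph.fromRel_adj, Equiv.prodCongr_apply, Equiv.coe_refl,
      Prod.map_apply, id_eq, ne_eq, Prod.mk.injEq, not_and, f.apply_eq_iff_eq, key]

end BCayIso

theorem stmt_17 (n : ℕ) (hn : 3 ≤ n) (heven : Even n) :
    ∃ S T : Set (QuaternionGroup n), S.ncard = 2 ∧ T.ncard = 2 ∧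
      Nonempty (BCay (QuaternionGroup n) S ≃g BCay (QuaternionGroup n) T) ∧
      ∀ (g : QuaternionGroup n) (α : QuaternionGroup n ≃* QuaternionGroup n),
        T ≠ (fun s => g * α s) '' S := by
  haveI : NeZero n := ⟨by omega⟩
  haveI : NeZero (2 * n) := ⟨by omega⟩
  obtain ⟨c, hc⟩ := heven
  have hc2 : 2 ≤ c := by omega
  have hcn : c < 2 * n := by omega
  set u : QuaternionGroup n := QuaternionGroup.a (c : ZMod (2 * n)) with hu
  set v : QuaternionGroup n := QuaternionGroup.xa 0 with hv
  have hcast : ((c : ZMod (2 * n))).val = c := ZMod.val_natCast_of_lt hcn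
  have horder_u : orderOf u = 4 := by
    rw [hu, QuaternionGroup.orderOf_a, hcast]
    have h4 : 2 * n = 4 * c := by omega
    rw [h4, Nat.gcd_eq_right ⟨4, by ring⟩]
    exact Nat.mul_div_cancel 4 (show 0 < c by omega)
  have horder_v : orderOf v = 4 := QuaternionGroup.orderOf_xa 0
  have hone : (1 : QuaternionGroup n) = QuaternionGroup.a 0 := QuaternionGroup.one_def
  have hone_ne_u : (1 : QuaternionGroup n) ≠ u := by
    rw [hone, hu]
    intro h
    have h2 := (QuaternionGroup.a.inj h).symm
    rw [← ZMod.val_eq_zero, hcast] at h2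
    omega
  have hone_ne_v : (1 : QuaternionGroup n) ≠ v := by
    rw [hone, hv]; exact fun h => nomatch h
  refine ⟨{1, u}, {1, v}, Set.ncard_pair hone_ne_u, Set.ncard_pair hone_ne_v, ?_, ?_⟩
  · obtain ⟨f, hf⟩ := exists_left_intertwiner u v (horder_u.trans horder_v.symm)
    exact ⟨bcayIsoOfIntertwiner u v f hf⟩
  · intro g α hEq
    -- α maps `a 1` to some `a k`
    have hα1 : ∃ k : ZMod (2 * n), α (QuaternionGroup.a 1) = QuaternionGroup.a k := by
      have hord : orderOf (α (QuaternionGroup.a 1)) = 2 * n := by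
        exact (orderOf_injective α.toMonoidHom α.injective _).trans QuaternionGroup.orderOf_a_one
      cases h : α (QuaternionGroup.a 1) with
      | a j => exact ⟨j, rfl⟩
      | xa j =>
        rw [h, QuaternionGroup.orderOf_xa] at hord
        omega
    obtain ⟨k, hk⟩ := hα1
    -- hence α u is of the form `a m`
    have hαu : ∃ m : ZMod (2 * n), α u = QuaternionGroup.a m := by
      refine ⟨(k.val * c : ℕ), ?_⟩
      have h1 : u = (QuaternionGroup.a 1) ^ c := by
        rw [QuaternionGroup.a_one_pow]
      have h2 : QuaternionGroup.a k = (QuaternionGroup.a 1 : QuaternionGroup n) ^ k.val := by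
        rw [QuaternionGroup.a_one_pow, ZMod.natCast_zmod_val]
      rw [h1, map_pow, hk, h2, ← pow_mul, QuaternionGroup.a_one_pow]
    obtain ⟨m, hm⟩ := hαu
    have himg : (fun s => g * α s) '' {1, u} = {g, g * QuaternionGroup.a m} := by
      rw [Set.image_insert_eq, Set.image_singleton]
      simp only [map_one, mul_one, hm]
    rw [himg] at hEq
    -- now derive a contradiction
    have hvmem : v ∈ ({g, g * QuaternionGroup.a m} : Set (QuaternionGroup n)) := by
      rw [← hEq]; exact Set.mem_insert_of_mem _ rfl
    have h1mem : (1 : QuaternionGroup n) ∈ ({g, g * QuaternionGroup.a m} :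
        Set (QuaternionGroup n)) := by
      rw [← hEq]; exact Set.mem_insert _ _
    simp only [Set.mem_insert_iff, Set.mem_singleton_iff] at hvmem h1mem
    rcases h1mem with h1 | h1
    · -- g = 1
      rcases hvmem with h2 | h2
      · exact hone_ne_v (h1.trans h2.symm)
      · rw [← h1, one_mul] at h2
        rw [hv] at h2
        exact nomatch h2
    · -- g * a m = 1
      rcases hvmem with h2 | h2
      · -- v = g, so 1 = v * a m = xa m, contradiction
        rw [← h2, hv, QuaternionGroup.xa_mul_a, hone] at h1
        exact nomatch h1
      · rw [← h2] at h1
        exact hone_ne_v h1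
end

section
/- Let n ≥ 3 be odd and let s, t ∈ Q_{4n} with BCay(⟨s⟩,{1,s}) ≅ BCay(⟨t⟩,{1,t}). If both s and t have order 4, then {1,t} = α({1,s}) for some automorphism α of Q_{4n}. -/
open QuaternionGroup in
/-- The automorphism of `Q_{4n}` fixing `a i` and sending `xa i` to `xa (i + v)`. -/
def quatShift (n : ℕ) (v : ZMod (2 * n)) : QuaternionGroup n ≃* QuaternionGroup n where
  toFun x := match x with | .a i => .a i | .xa i => .xa (i + v)
  invFun x := match x with | .a i => .a i | .xa i => .xa (i - v)
  left_inv x := by cases x <;> simp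
  right_inv x := by cases x <;> simp
  map_mul' x y := by
    cases x <;> cases y <;>
      simp only [a_mul_a, a_mul_xa, xa_mul_a, xa_mul_xa] <;> congr 1 <;> ring

open QuaternionGroup in
theorem order_four_eq_xa (n : ℕ) (hn : 3 ≤ n) (hodd : Odd n) (s : QuaternionGroup n)
    (hs : orderOf s = 4) : ∃ i, s = xa i := by
  cases s with
  | a i =>
    exfalso
    have hnz : NeZero n := ⟨by omega⟩
    rw [orderOf_a] at hs
    have hdvd : (4 : ℕ) ∣ 2 * n := by
      rw [← hs]
      exact Nat.div_dvd_of_dvd (Nat.gcd_dvd_left _ _)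
    obtain ⟨k, hk⟩ := hodd
    omega
  | xa i => exact ⟨i, rfl⟩

theorem stmt_19 (n : ℕ) (hn : 3 ≤ n) (hodd : Odd n) (s t : QuaternionGroup n)
    (hs : orderOf s = 4) (ht : orderOf t = 4)
    (hiso : Nonempty
      (BCay (Subgroup.zpowers s) {1, ⟨s, Subgroup.mem_zpowers s⟩} ≃g
        BCay (Subgroup.zpowers t) {1, ⟨t, Subgroup.mem_zpowers t⟩})) :
    ∃ α : QuaternionGroup n ≃* QuaternionGroup n,
      ({1, t} : Set (QuaternionGroup n)) = α '' {1, s} := by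
  obtain ⟨i, rfl⟩ := order_four_eq_xa n hn hodd s hs
  obtain ⟨j, rfl⟩ := order_four_eq_xa n hn hodd t ht
  refine ⟨quatShift n (j - i), ?_⟩
  rw [Set.image_pair]
  have h1 : quatShift n (j - i) 1 = 1 := map_one _
  have h2 : quatShift n (j - i) (QuaternionGroup.xa i) = QuaternionGroup.xa j := by
    show QuaternionGroup.xa (i + (j - i)) = _
    congr 1; ring
  rw [h1, h2]
end
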